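/- arXiv:1008.3267 — 10 statements merged into one kernel-verified Lean document; each statement's English description precedes it below -/
import Mathlib

section
/- Let X be a topological vector space over ℝ or ℂ and let {x_n} be a sequence in X such that x_n → 0 and the series ∑ a_n x_n converges for every a ∈ ℓ¹. If D is the closed balanced convex hull of {x_n : n ∈ ℕ}, then D is compact. -/
/-!
The closed unit ball `B` of `ℓ¹` is compact for coordinatewise convergence (Tychonoff). On `B` the
summation map `a ↦ ∑ aₙ xₙ` is the uniform limit of the continuous partial sums: if `V` is a
closed, balanced, convex neighbourhood of `0` containing `xₙ` for all `n ≥ N`, then every tail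
`∑_{n ≥ N} aₙ xₙ` with `a ∈ B` lies in `V`. So the summation map is continuous and its image is
compact. The set of sums is balanced, convex and contains every `xₙ = ∑ δₙₘ xₘ`, hence contains
the balanced convex hull of the `xₙ`, and it lies in the closure of that compact image.
-/

open Filter Set Topology

theorem continuous_of_eventually_forall_sub_mem_nhds_zero {α G : Type*} [TopologicalSpace α]
    [AddGroup G] [TopologicalSpace G] [IsTopologicalAddGroup G] {ι : Type*} {p : Filter ι}
    [p.NeBot] {F : ι → α → G} {f : α → G} (hF : ∀ i, Continuous (F i))
    (h : ∀ V ∈ 𝓝 (0 : G), ∀ᶠ i in p, ∀ a, F i a - f a ∈ V) : Continuous f := by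
  let := IsTopologicalAddGroup.rightUniformSpace G
  refine TendstoUniformly.continuous (p := p) (F := F) (fun u hu => ?_)
    (Eventually.frequently (Eventually.of_forall hF))
  obtain ⟨V, hV, hVu⟩ := mem_comap.1 hu
  filter_upwards [h V hV] with i hi a
  exact hVu (by simpa [sub_eq_add_neg] using hi a)

section ellOne

variable {E : Type*} [SeminormedAddCommGroup E]

variable (E) in
def ellOneClosedBall : Set (ℕ → E) := {a | ∀ N, ∑ n ∈ Finset.range N, ‖a n‖ ≤ 1}

theorem summable_norm_of_mem_ellOneClosedBall {a : ℕ → E} (ha : a ∈ ellOneClosedBall E) :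
    Summable fun n => ‖a n‖ :=
  summable_of_sum_range_le (fun _ => norm_nonneg _) ha

theorem sum_Ico_norm_le_one_of_mem_ellOneClosedBall {a : ℕ → E} (ha : a ∈ ellOneClosedBall E)
    (N M : ℕ) : ∑ n ∈ Finset.Ico N M, ‖a n‖ ≤ 1 := by
  refine le_trans ?_ (ha M)
  rw [Finset.range_eq_Ico]
  exact Finset.sum_le_sum_of_subset_of_nonneg (Finset.Ico_subset_Ico_left N.zero_le)
    fun _ _ _ => norm_nonneg _

theorem isCompact_ellOneClosedBall [ProperSpace E] : IsCompact (ellOneClosedBall E) := by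
  have hsub : ellOneClosedBall E ⊆ univ.pi fun _ => Metric.closedBall 0 1 := fun a ha n _ => by
    simpa using (Finset.single_le_sum (fun m _ => norm_nonneg (a m))
      (Finset.self_mem_range_succ n)).trans (ha (n + 1))
  have hclosed : IsClosed (ellOneClosedBall E) := by
    rw [ellOneClosedBall, ofPred_forall]
    exact isClosed_iInter fun N => isClosed_le (by fun_prop) continuous_const
  exact (isCompact_univ_pi fun _ => isCompact_closedBall _ _).of_isClosed_subset hclosed hsub

theorem Pi.single_mem_ellOneClosedBall {e : E} (he : ‖e‖ ≤ 1) (n : ℕ) :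
    Pi.single n e ∈ ellOneClosedBall E := fun N => by
  classical
  simp only [Pi.apply_single (fun _ => norm) (fun _ => norm_zero), Finset.sum_pi_single']
  split_ifs <;> simp [he]

theorem balanced_ellOneClosedBall {𝕜 : Type*} [NormedField 𝕜] [NormedSpace 𝕜 E] :
    Balanced 𝕜 (ellOneClosedBall E) := by
  rintro c hc _ ⟨a, ha, rfl⟩ N
  calc ∑ n ∈ Finset.range N, ‖c • a n‖ = ‖c‖ * ∑ n ∈ Finset.range N, ‖a n‖ := by
        simp [norm_smul, Finset.mul_sum]
    _ ≤ 1 := mul_le_one₀ hc (by positivity) (ha N)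

theorem convex_ellOneClosedBall [NormedSpace ℝ E] : Convex ℝ (ellOneClosedBall E) := by
  intro a ha b hb s t hs ht hst N
  calc ∑ n ∈ Finset.range N, ‖(s • a + t • b) n‖
      ≤ s * ∑ n ∈ Finset.range N, ‖a n‖ + t * ∑ n ∈ Finset.range N, ‖b n‖ := by
        simp only [Finset.mul_sum, ← Finset.sum_add_distrib]
        refine Finset.sum_le_sum fun n _ => (norm_add_le _ _).trans_eq ?_
        simp [norm_smul, abs_of_nonneg hs, abs_of_nonneg ht]
    _ ≤ s * 1 + t * 1 := by gcongr; exacts [ha N, hb N]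
    _ = 1 := by rw [mul_one, mul_one, hst]

end ellOne

theorem Convex.sum_smul_mem_of_sum_le_one {X ι : Type*} [AddCommGroup X] [Module ℝ X] {V : Set X}
    (hV : Convex ℝ V) (h0 : (0 : X) ∈ V) {s : Finset ι} {w : ι → ℝ} {z : ι → X}
    (hw0 : ∀ i ∈ s, 0 ≤ w i) (hw1 : ∑ i ∈ s, w i ≤ 1) (hz : ∀ i ∈ s, z i ∈ V) :
    ∑ i ∈ s, w i • z i ∈ V := by
  rcases (Finset.sum_nonneg hw0).eq_or_lt with hw | hw
  · rw [Finset.sum_eq_zero fun i hi => by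
      rw [(Finset.sum_eq_zero_iff_of_nonneg hw0).1 hw.symm i hi, zero_smul]]
    exact h0
  · have hmass := hV.centerMass_mem hw0 hw hz
    rw [← smul_inv_smul₀ hw.ne' (∑ i ∈ s, w i • z i)]
    exact hV.smul_mem_of_zero_mem h0 hmass ⟨hw.le, hw1⟩

theorem Balanced.sum_smul_mem_of_sum_norm_le_one {𝕜 X ι : Type*} [NormedField 𝕜]
    [NormedAlgebra ℝ 𝕜] [AddCommGroup X] [Module 𝕜 X] [Module ℝ X] [IsScalarTower ℝ 𝕜 X]
    {V : Set X} (hVb : Balanced 𝕜 V) (hVc : Convex ℝ V) (h0 : (0 : X) ∈ V) {s : Finset ι}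
    {c : ι → 𝕜} {y : ι → X} (hc : ∑ i ∈ s, ‖c i‖ ≤ 1) (hy : ∀ i ∈ s, y i ∈ V) :
    ∑ i ∈ s, c i • y i ∈ V := by
  have hpolar : ∀ i, c i • y i = ‖c i‖ • ((‖c i‖⁻¹ • c i) • y i) := fun i => by
    rcases eq_or_ne (c i) 0 with hci | hci
    · simp [hci]
    · rw [← smul_assoc, smul_smul, mul_inv_cancel₀ (norm_ne_zero_iff.2 hci), one_smul]
  simp only [hpolar]
  refine hVc.sum_smul_mem_of_sum_le_one h0 (fun i _ => norm_nonneg _) hc fun i hi =>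
    hVb.smul_mem ?_ (hy i hi)
  rw [norm_smul, norm_inv, norm_norm]
  exact inv_mul_le_one_of_le₀ le_rfl (norm_nonneg _)

theorem Balanced.convexHull_of_smulCommClass {𝕜 R X : Type*} [SeminormedRing 𝕜] [Semiring R]
    [PartialOrder R] [AddCommMonoid X] [Module R X] [DistribSMul 𝕜 X] [SMulCommClass R 𝕜 X]
    {s : Set X} (hs : Balanced 𝕜 s) : Balanced 𝕜 (convexHull R s) := by
  suffices Convex R {x | ∀ a : 𝕜, ‖a‖ ≤ 1 → a • x ∈ convexHull R s} by
    rw [balanced_iff_smul_mem] at hs ⊢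
    refine fun a ha x hx => convexHull_min ?_ this hx a ha
    exact fun y hy a ha => subset_convexHull R s (hs ha hy)
  intro x hx y hy u v hu hv huv a ha
  rw [smul_add, ← smul_comm u, ← smul_comm v]
  exact convex_convexHull R s (hx a ha) (hy a ha) hu hv huv

theorem SummationFilter.hasSum_conditional_nat_iff {X : Type*} [AddCommMonoid X]
    [TopologicalSpace X] {f : ℕ → X} {y : X} :
    HasSum f y (SummationFilter.conditional ℕ) ↔
      Tendsto (fun N => ∑ n ∈ Finset.range N, f n) atTop (𝓝 y) := by
  simp [HasSum, tendsto_map'_iff, Function.comp_def]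

section LocallyConvex

variable {𝕜 X : Type*} [RCLike 𝕜] [AddCommGroup X] [Module 𝕜 X] [TopologicalSpace X]
  [ContinuousSMul 𝕜 X] [Module ℝ X] [IsScalarTower ℝ 𝕜 X]

variable (𝕜 X) in
theorem nhds_zero_hasBasis_balanced_convex [LocallyConvexSpace ℝ X] :
    (𝓝 (0 : X)).HasBasis (fun V => V ∈ 𝓝 (0 : X) ∧ Balanced 𝕜 V ∧ Convex ℝ V) id := by
  have : SMulCommClass ℝ 𝕜 X := IsScalarTower.to_smulCommClass
  refine (LocallyConvexSpace.convex_basis_zero ℝ X).to_hasBasis (fun s ⟨hs, hsc⟩ => ?_)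
    fun s hs => ⟨s, ⟨hs.1, hs.2.2⟩, subset_rfl⟩
  exact ⟨convexHull ℝ (balancedCore 𝕜 s),
    ⟨mem_of_superset (balancedCore_mem_nhds_zero hs) (subset_convexHull ℝ _),
      (balancedCore_balanced s).convexHull_of_smulCommClass, convex_convexHull ℝ _⟩,
    convexHull_min (balancedCore_subset s) hsc⟩

variable (𝕜 X) in
theorem nhds_zero_hasBasis_isClosed_balanced_convex [IsTopologicalAddGroup X]
    [LocallyConvexSpace ℝ X] :
    (𝓝 (0 : X)).HasBasis
      (fun V => V ∈ 𝓝 (0 : X) ∧ IsClosed V ∧ Balanced 𝕜 V ∧ Convex ℝ V) id := by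
  have : ContinuousSMul ℝ X := IsScalarTower.continuousSMul 𝕜
  refine (closed_nhds_basis 0).to_hasBasis (fun W ⟨hW, hWc⟩ => ?_)
    fun V hV => ⟨V, ⟨hV.1, hV.2.1⟩, subset_rfl⟩
  obtain ⟨V, ⟨hV, hVb, hVc⟩, hVW⟩ := (nhds_zero_hasBasis_balanced_convex 𝕜 X).mem_iff.1 hW
  exact ⟨closure V, ⟨mem_of_superset hV subset_closure, isClosed_closure, hVb.closure,
    hVc.closure⟩, closure_minimal hVW hWc⟩

end LocallyConvex

section SeriesSums

variable {𝕜 X : Type*} [RCLike 𝕜] [AddCommGroup X] [Module 𝕜 X] [TopologicalSpace X]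

theorem HasSum.sub_sum_range_smul_mem [IsTopologicalAddGroup X] [Module ℝ X]
    [IsScalarTower ℝ 𝕜 X] {x : ℕ → X} {V : Set X} (hVcl : IsClosed V) (hVb : Balanced 𝕜 V)
    (hVc : Convex ℝ V) (h0 : (0 : X) ∈ V) {N : ℕ} (hxV : ∀ n ≥ N, x n ∈ V) {a : ℕ → 𝕜}
    (ha : a ∈ ellOneClosedBall 𝕜) {y : X}
    (hy : HasSum (fun n => a n • x n) y (SummationFilter.conditional ℕ)) :
    y - ∑ n ∈ Finset.range N, a n • x n ∈ V := by
  refine hVcl.mem_of_tendsto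
    ((SummationFilter.hasSum_conditional_nat_iff.1 hy).sub_const _) ?_
  filter_upwards [eventually_ge_atTop N] with M hM
  rw [← Finset.sum_Ico_eq_sub _ hM]
  exact hVb.sum_smul_mem_of_sum_norm_le_one hVc h0
    (sum_Ico_norm_le_one_of_mem_ellOneClosedBall ha N M)
    fun n hn => hxV n (Finset.mem_Ico.1 hn).1

theorem continuous_of_hasSum_smul [IsTopologicalAddGroup X] [ContinuousSMul 𝕜 X] [Module ℝ X]
    [IsScalarTower ℝ 𝕜 X] [LocallyConvexSpace ℝ X] {x : ℕ → X} (hx0 : Tendsto x atTop (𝓝 0))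
    {T : ellOneClosedBall 𝕜 → X}
    (hT : ∀ a : ellOneClosedBall 𝕜,
      HasSum (fun n => (a : ℕ → 𝕜) n • x n) (T a) (SummationFilter.conditional ℕ)) :
    Continuous T := by
  have hF (N : ℕ) : Continuous fun a : ellOneClosedBall 𝕜 => ∑ n ∈ Finset.range N, a.1 n • x n :=
    continuous_finsetSum _ fun n _ =>
      ((continuous_apply n).comp continuous_subtype_val).smul continuous_const
  refine continuous_of_eventually_forall_sub_mem_nhds_zero (p := atTop) hF ?_
  intro W hW
  obtain ⟨V, ⟨hV, hVcl, hVb, hVc⟩, hVW : V ⊆ W⟩ :=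
    (nhds_zero_hasBasis_isClosed_balanced_convex 𝕜 X).mem_iff.1 hW
  obtain ⟨N, hN⟩ := eventually_atTop.1 (hx0 hV)
  filter_upwards [eventually_ge_atTop N] with M hM a
  refine hVW ?_
  rw [← neg_sub, hVb.neg_mem_iff]
  exact (hT a).sub_sum_range_smul_mem hVcl hVb hVc (mem_of_mem_nhds hV)
    (fun n hn => hN n (hM.trans hn)) a.2

variable (𝕜) in
/-- All limits of the partial sums are collected, since `X` need not be Hausdorff. -/
def seriesSums (x : ℕ → X) : Set X :=
  {y | ∃ a ∈ ellOneClosedBall 𝕜, HasSum (fun n => a n • x n) y (SummationFilter.conditional ℕ)}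

theorem range_subset_seriesSums (x : ℕ → X) : range x ⊆ seriesSums 𝕜 x := by
  classical
  rintro _ ⟨n, rfl⟩
  refine ⟨Pi.single n 1, Pi.single_mem_ellOneClosedBall norm_one.le n, ?_⟩
  rw [SummationFilter.hasSum_conditional_nat_iff]
  refine tendsto_const_nhds.congr' ?_
  filter_upwards [eventually_gt_atTop n] with N hN
  rw [Finset.sum_eq_single_of_mem n (Finset.mem_range.2 hN) fun m _ hm => by simp [hm]]
  simp

theorem balanced_seriesSums [ContinuousConstSMul 𝕜 X] (x : ℕ → X) :
    Balanced 𝕜 (seriesSums 𝕜 x) := by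
  rintro c hc _ ⟨y, ⟨a, ha, hy⟩, rfl⟩
  refine ⟨c • a, balanced_ellOneClosedBall.smul_mem hc ha, ?_⟩
  simpa [mul_smul] using hy.const_smul c

theorem convex_seriesSums [IsTopologicalAddGroup X] [ContinuousSMul 𝕜 X] [Module ℝ X]
    [IsScalarTower ℝ 𝕜 X] (x : ℕ → X) : Convex ℝ (seriesSums 𝕜 x) := by
  have : ContinuousSMul ℝ X := IsScalarTower.continuousSMul 𝕜
  rintro _ ⟨a, ha, hya⟩ _ ⟨b, hb, hyb⟩ s t hs ht hst
  refine ⟨s • a + t • b, convex_ellOneClosedBall ha hb hs ht hst, ?_⟩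
  simpa [add_smul, smul_assoc] using (hya.const_smul s).add (hyb.const_smul t)

theorem seriesSums_subset_closure_range [IsTopologicalAddGroup X] {x : ℕ → X}
    {T : ellOneClosedBall 𝕜 → X}
    (hT : ∀ a : ellOneClosedBall 𝕜,
      HasSum (fun n => (a : ℕ → 𝕜) n • x n) (T a) (SummationFilter.conditional ℕ)) :
    seriesSums 𝕜 x ⊆ closure (range T) := by
  rintro y ⟨a, ha, hy⟩
  exact ((tendsto_nhds_unique_inseparable hy (hT ⟨a, ha⟩)).mem_closed_iff isClosed_closure).2
    (subset_closure ⟨_, rfl⟩)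

end SeriesSums

/-- The closed convex balanced hull of an ℓ¹-sequence in a locally convex
topological vector space is compact. -/
theorem stmt_0 {𝕜 : Type*} [RCLike 𝕜] {X : Type*} [AddCommGroup X] [Module 𝕜 X]
    [TopologicalSpace X] [IsTopologicalAddGroup X] [ContinuousSMul 𝕜 X]
    [Module ℝ X] [IsScalarTower ℝ 𝕜 X] [LocallyConvexSpace ℝ X]
    (x : ℕ → X) (hx0 : Filter.Tendsto x Filter.atTop (nhds 0))
    (hxsum : ∀ a : ℕ → 𝕜, Summable (fun n => ‖a n‖) →
      ∃ s : X, Filter.Tendsto (fun N => ∑ n ∈ Finset.range N, a n • x n)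
        Filter.atTop (nhds s)) :
    IsCompact (closure (convexHull ℝ (balancedHull 𝕜 (Set.range x)))) := by
  choose T hT using fun a : ellOneClosedBall 𝕜 =>
    (hxsum a (summable_norm_of_mem_ellOneClosedBall a.2)).imp
      fun _ => SummationFilter.hasSum_conditional_nat_iff.2
  have : CompactSpace (ellOneClosedBall 𝕜) :=
    isCompact_iff_compactSpace.1 isCompact_ellOneClosedBall
  have hK : IsCompact (closure (range T)) :=
    (isCompact_range (continuous_of_hasSum_smul hx0 hT)).closure
  refine hK.of_isClosed_subset isClosed_closure (closure_minimal ?_ isClosed_closure)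
  calc convexHull ℝ (balancedHull 𝕜 (range x))
      ⊆ seriesSums 𝕜 x := convexHull_min
        ((balanced_seriesSums x).balancedHull_subset_of_subset (range_subset_seriesSums x))
        (convex_seriesSums x)
    _ ⊆ closure (range T) := seriesSums_subset_closure_range hT
end

section
/- Let V be a vector space, T : V → V linear, and suppose V = Y ⊕ Z where Z is finite-dimensional of dimension m, T(Y) ⊆ Y, and the restriction T|_Y is linearly conjugate to M^k on K[X] for some k ≥ 1 (Mp(z) = z·p(z)). Then T is not surjective. -/
open Polynomial

/-- If V = Y ⊕ Z with Z finite-dimensional, T(Y) ⊆ Y and T|_Y is linearly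
conjugate to M^k (k ≥ 1) on K[X], then T is not surjective. -/
theorem stmt_4 {K : Type*} [Field K] {V : Type*} [AddCommGroup V] [Module K V]
    (T : Module.End K V) (Y Z : Submodule K V) (hcompl : IsCompl Y Z)
    (hZ : Module.Finite K Z) (hTY : ∀ y ∈ Y, T y ∈ Y)
    (k : ℕ) (hk : 1 ≤ k) (J : K[X] ≃ₗ[K] Y)
    (hconj : ∀ p : K[X], T (J p : V) = (J ((X : K[X]) ^ k * p) : V)) :
    ¬ Function.Surjective T := by
  intro hs
  classical
  set W : Submodule K V := Y.map T with hWdef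
  have hWY : W ≤ Y := by rintro w ⟨y, hy, rfl⟩; exact hTY y hy
  -- key: c • (J 1 : V) ∈ W → c = 0
  have hkey : ∀ c : K, (c • ((J 1 : Y) : V)) ∈ W → c = 0 := by
    intro c hc
    obtain ⟨y, hy, hyy⟩ := hc
    have hy' : y = ((J (J.symm ⟨y, hy⟩) : Y) : V) := by simp
    rw [hy', hconj] at hyy
    have hJc : c • ((J 1 : Y) : V) = ((J (Polynomial.C c) : Y) : V) := by
      rw [← Submodule.coe_smul, ← map_smul]
      congr 2
      rw [Polynomial.smul_eq_C_mul, mul_one]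
    rw [hJc] at hyy
    have hpol : (X : K[X]) ^ k * J.symm ⟨y, hy⟩ = Polynomial.C c := by
      have := Subtype.coe_injective hyy
      exact J.injective this
    have := congrArg (Polynomial.eval 0) hpol
    simpa [zero_pow (by omega : k ≠ 0)] using this.symm
  -- the surjection Z → V ⧸ W
  set f : Z →ₗ[K] V ⧸ W := (W.mkQ.comp (T : V →ₗ[K] V)).comp Z.subtype with hfdef
  have hfsurj : Function.Surjective f := by
    intro v
    obtain ⟨x, rfl⟩ := W.mkQ_surjective v
    obtain ⟨u, rfl⟩ := hs x
    have hu : u ∈ Y ⊔ Z := by rw [hcompl.sup_eq_top]; trivial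
    obtain ⟨y, hy, z, hz, rfl⟩ := Submodule.mem_sup.mp hu
    refine ⟨⟨z, hz⟩, ?_⟩
    have hTy : W.mkQ (T y) = 0 := (Submodule.Quotient.mk_eq_zero _).mpr ⟨y, hy, rfl⟩
    simp only [hfdef, LinearMap.comp_apply, Submodule.subtype_apply]
    rw [map_add T, map_add, hTy, zero_add]
  have hfin : Module.Finite K (V ⧸ W) := Module.Finite.of_surjective f hfsurj
  have hub : Module.finrank K (V ⧸ W) ≤ Module.finrank K Z := by
    have h1 : LinearMap.range f = ⊤ := LinearMap.range_eq_top.mpr hfsurj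
    have h2 := LinearMap.finrank_range_le f
    rwa [h1, finrank_top] at h2
  -- the injection Z × K → V ⧸ W
  set g : Z × K →ₗ[K] V ⧸ W :=
    (W.mkQ.comp Z.subtype).coprod
      (LinearMap.toSpanSingleton K _ (W.mkQ ((J 1 : Y) : V))) with hgdef
  have hginj : Function.Injective g := by
    rw [← LinearMap.ker_eq_bot, Submodule.eq_bot_iff]
    rintro ⟨z, c⟩ h
    simp only [hgdef, LinearMap.mem_ker, LinearMap.coprod_apply, LinearMap.comp_apply,
      Submodule.subtype_apply, LinearMap.toSpanSingleton_apply] at h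
    have hmem : (z : V) + c • ((J 1 : Y) : V) ∈ W := by
      rw [← Submodule.Quotient.mk_eq_zero W]
      simpa [Submodule.Quotient.mk_add, Submodule.Quotient.mk_smul] using h
    have hzY : (z : V) ∈ Y := by
      have h1 : (z : V) + c • ((J 1 : Y) : V) ∈ Y := hWY hmem
      have h2 : c • ((J 1 : Y) : V) ∈ Y := Y.smul_mem c (J 1).2
      have := Y.sub_mem h1 h2
      simpa using this
    have hz0 : (z : V) = 0 := by
      have := hcompl.disjoint
      rw [Submodule.disjoint_def] at this
      exact this _ hzY z.2
    have hc0 : c = 0 := by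
      apply hkey c
      rwa [hz0, zero_add] at hmem
    simp [Prod.ext_iff, hc0, ← Subtype.coe_inj, hz0]
  have hlb : Module.finrank K (Z × K) ≤ Module.finrank K (V ⧸ W) :=
    LinearMap.finrank_le_finrank_of_injective hginj
  rw [Module.finrank_prod, Module.finrank_self] at hlb
  omega
end

section
/- Let V be a vector space of countable infinite dimension over a field K and T : V → V a linear map such that span{Tᵏ(L) : k ∈ ℕ} = V for some finite-dimensional subspace L. Then T is not surjective. -/
/-!
Through `T`, the space `V` becomes a finitely generated `K[X]`-module `M` (generated by `L`), and
surjectivity of `T` says `X • M = M`. Nakayama's lemma then yields a polynomial `p` with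
`p(0) = 1` annihilating `M`. So `M` is a finitely generated module over the finite-dimensional
algebra `K[X] ⧸ (p)`, and `V` is finite-dimensional, contradicting `dim V = ℵ₀`.
-/

open Polynomial Module

theorem Module.AEval'.finite_of_span_iUnion_pow_image_eq_top {R M : Type*} [CommSemiring R]
    [AddCommMonoid M] [Module R M] {T : Module.End R M} {L : Submodule R M} (hL : L.FG)
    (hspan : Submodule.span R (⋃ n : ℕ, (T ^ n) '' (L : Set M)) = ⊤) :
    Module.Finite R[X] (AEval' T) := by
  classical
  obtain ⟨s, rfl⟩ := hL
  set N := Submodule.span R[X] (s.image (AEval'.of T) : Set (AEval' T))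
  set N' : Submodule R M := (N.restrictScalars R).comap (AEval'.of T : M →ₗ[R] AEval' T)
  have hgen : Submodule.span R s ≤ N' :=
    Submodule.span_le.mpr fun x hx => (Submodule.subset_span (by simpa using ⟨x, hx, rfl⟩) : _ ∈ N)
  have hpow : ⊤ ≤ N' := by
    rw [← hspan, Submodule.span_le]
    rintro _ ⟨_, ⟨n, rfl⟩, x, hx, rfl⟩
    have h : AEval'.of T ((T ^ n) x) = X ^ n • AEval'.of T x := (AEval'.X_pow_smul_of T x n).symm
    show AEval'.of T ((T ^ n) x) ∈ N
    exact h ▸ N.smul_mem (X ^ n) (hgen hx)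
  refine ⟨⟨s.image (AEval'.of T), eq_top_iff.mpr fun m _ => ?_⟩⟩
  simpa [N, N'] using hpow (Submodule.mem_top (x := (AEval'.of T).symm m))

theorem Module.End.exists_coeff_zero_eq_one_and_aeval_eq_zero {R M : Type*} [CommRing R]
    [AddCommGroup M] [Module R M] {T : Module.End R M} [Module.Finite R[X] (AEval' T)]
    (hT : Function.Surjective T) : ∃ p : R[X], p.coeff 0 = 1 ∧ aeval T p = 0 := by
  have hX : (⊤ : Submodule R[X] (AEval' T)) ≤ Ideal.span {(X : R[X])} • ⊤ := by
    intro m _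
    obtain ⟨v, hv⟩ := hT ((AEval'.of T).symm m)
    have hm : m = (X : R[X]) • AEval'.of T v := by simp [AEval'.X_smul_of, hv]
    exact hm ▸ Submodule.smul_mem_smul (Ideal.mem_span_singleton_self X) trivial
  obtain ⟨p, hp1, hp0⟩ := Submodule.exists_sub_one_mem_and_smul_eq_zero_of_fg_of_le_smul
    (Ideal.span {(X : R[X])}) ⊤ (Module.finite_def.mp inferInstance) hX
  refine ⟨p, ?_, LinearMap.ext fun v => ?_⟩
  · simpa [sub_eq_zero] using X_dvd_iff.mp (Ideal.mem_span_singleton.mp hp1)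
  · simpa using congrArg (AEval'.of T).symm (hp0 (AEval'.of T v) trivial)

theorem Module.End.finite_of_aeval_eq_zero {K V : Type*} [Field K] [AddCommGroup V] [Module K V]
    {T : Module.End K V} [Module.Finite K[X] (AEval' T)] {p : K[X]} (hp : p ≠ 0)
    (hpT : aeval T p = 0) : Module.Finite K V := by
  have htors : IsTorsionBySet K[X] (AEval' T) (Ideal.span {p}) := by
    rw [← isTorsionBySet_iff_is_torsion_by_span, isTorsionBySet_singleton_iff]
    intro m
    apply (AEval'.of T).symm.injective
    simp [AEval.of_symm_smul, hpT]
  let := htors.module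
  have : Module.Finite K (K[X] ⧸ Ideal.span {p}) := (AdjoinRoot.powerBasis hp).finite
  have : Module.Finite (K[X] ⧸ Ideal.span {p}) (AEval' T) :=
    Module.Finite.of_restrictScalars_finite K[X] _ _
  have : Module.Finite K (AEval' T) := Module.Finite.trans (K[X] ⧸ Ideal.span {p}) _
  exact Module.Finite.equiv (AEval'.of T).symm

/-- A multicyclic linear operator on a vector space of countably infinite
dimension is not surjective. -/
theorem stmt_6 {K : Type*} [Field K] {V : Type*} [AddCommGroup V] [Module K V]
    (hdim : Module.rank K V = Cardinal.aleph0)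
    (T : Module.End K V) (L : Submodule K V) (hL : Module.Finite K L)
    (hmc : Submodule.span K (⋃ n : ℕ, (T ^ n) '' (L : Set V)) = ⊤) :
    ¬ Function.Surjective T := by
  intro hT
  have := AEval'.finite_of_span_iUnion_pow_image_eq_top (Module.Finite.iff_fg.mp hL) hmc
  obtain ⟨p, hp1, hp0⟩ := T.exists_coeff_zero_eq_one_and_aeval_eq_zero hT
  have : Module.Finite K V := T.finite_of_aeval_eq_zero (fun h => by simp [h] at hp1) hp0
  exact (Module.rank_lt_aleph0 K V).ne hdim
end

section
/- Let X be a topological vector space and T : X → φ a surjective continuous linear operator, where φ is the countable direct sum of one-dimensional spaces (countable-dimensional space with the strongest locally convex topology, in which every linear map out of φ into any topological vector space is continuous). Then X is topologically isomorphic to φ × ker T. -/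
/-!
Every linear map out of `Φ` is continuous, so a linear right inverse of `T`, which exists
by linear algebra alone, is automatically a continuous one. A surjection with a continuous
linear right inverse `S` splits topologically: `x ↦ (T x, x - S (T x))` is the isomorphism.
-/

theorem ContinuousLinearMap.exists_rightInverse_of_surjective_of_forall_continuous
    {𝕜 X Φ : Type*} [DivisionRing 𝕜] [TopologicalSpace 𝕜]
    [AddCommGroup X] [Module 𝕜 X] [TopologicalSpace X]
    [AddCommGroup Φ] [Module 𝕜 Φ] [TopologicalSpace Φ]
    (hΦ : ∀ f : Φ →ₗ[𝕜] X, Continuous f)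
    (T : X →L[𝕜] Φ) (hT : Function.Surjective T) :
    ∃ S : Φ →L[𝕜] X, Function.RightInverse S T := by
  obtain ⟨S, hS⟩ := (T : X →ₗ[𝕜] Φ).exists_rightInverse_of_surjective (LinearMap.range_eq_top.2 hT)
  exact ⟨⟨S, hΦ S⟩, LinearMap.congr_fun hS⟩

theorem stmt_7_general {𝕜 : Type} [RCLike 𝕜] {X Φ : Type}
    [AddCommGroup X] [Module 𝕜 X] [TopologicalSpace X] [IsTopologicalAddGroup X]
    [ContinuousSMul 𝕜 X]
    [AddCommGroup Φ] [Module 𝕜 Φ] [TopologicalSpace Φ]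
    (hΦ : ∀ (W : Type) [AddCommGroup W] [Module 𝕜 W] [TopologicalSpace W]
      [IsTopologicalAddGroup W] [ContinuousSMul 𝕜 W] (f : Φ →ₗ[𝕜] W), Continuous f)
    (T : X →L[𝕜] Φ) (hT : Function.Surjective T) :
    Nonempty (X ≃L[𝕜] (Φ × LinearMap.ker (T : X →ₗ[𝕜] Φ))) := by
  obtain ⟨S, hS⟩ :=
    T.exists_rightInverse_of_surjective_of_forall_continuous (hΦ X) hT
  exact ⟨ContinuousLinearEquiv.equivOfRightInverse T S hS⟩

/-- If T : X → φ is a surjective continuous linear operator onto φ (a countable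
dimensional space with the property that every linear map out of it into any
topological vector space is continuous), then X ≅ φ × ker T topologically. -/
theorem stmt_7 {𝕜 : Type} [RCLike 𝕜] {X Φ : Type}
    [AddCommGroup X] [Module 𝕜 X] [TopologicalSpace X] [IsTopologicalAddGroup X]
    [ContinuousSMul 𝕜 X]
    [AddCommGroup Φ] [Module 𝕜 Φ] [TopologicalSpace Φ] [IsTopologicalAddGroup Φ]
    [ContinuousSMul 𝕜 Φ]
    (hrank : Module.rank 𝕜 Φ = Cardinal.aleph0)
    (hΦ : ∀ (W : Type) [AddCommGroup W] [Module 𝕜 W] [TopologicalSpace W]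
      [IsTopologicalAddGroup W] [ContinuousSMul 𝕜 W] (f : Φ →ₗ[𝕜] W), Continuous f)
    (T : X →L[𝕜] Φ) (hT : Function.Surjective T) :
    Nonempty (X ≃L[𝕜] (Φ × LinearMap.ker (T : X →ₗ[𝕜] Φ))) :=
  stmt_7_general hΦ T hT
end

section
/- Let X and Y be topological vector spaces, T : X → Y × K a continuous linear operator with dense range, and H a closed hyperplane of X. Then there exists a continuous linear operator S : H → Y with dense range. -/
/-!
The functional `x ↦ (T x).2` is nonzero because `T` has dense range, and a vector space is not
the union of two proper subspaces, so some `x₀` has `(T x₀).2 = 1` and `f x₀ ≠ 0`. The map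
`x ↦ (T x).1 - (T x).2 • (T x₀).1` is `T` followed by a continuous surjection `Y × 𝕜 → Y`, hence has
dense range; it kills `x₀`, and `X = 𝕜 x₀ ⊕ ker f`, so its restriction to `ker f` has the same range.
-/

open LinearMap

theorem LinearMap.exists_apply_ne_zero_and_apply_ne_zero {R M N P : Type*} [Ring R]
    [AddCommGroup M] [Module R M] [AddCommMonoid N] [Module R N] [AddCommMonoid P] [Module R P]
    {f : M →ₗ[R] N} {g : M →ₗ[R] P} (hf : f ≠ 0) (hg : g ≠ 0) : ∃ x, f x ≠ 0 ∧ g x ≠ 0 := by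
  by_contra! h
  have hcover : ((⊤ : Submodule R M) : Set M) ⊆ ker f ∪ ker g := fun x _ ↦ by
    by_cases hx : f x = 0
    · exact Or.inl hx
    · exact Or.inr (h x hx)
  rcases AddSubgroupClass.subset_union.mp hcover with hker | hker
  · exact hf (ker_eq_top.mp (top_le_iff.mp hker))
  · exact hg (ker_eq_top.mp (top_le_iff.mp hker))

theorem LinearMap.exists_apply_eq_one_and_apply_ne_zero {K M N : Type*} [Field K]
    [AddCommGroup M] [Module K M] [AddCommMonoid N] [Module K N]
    {g : M →ₗ[K] K} {f : M →ₗ[K] N} (hg : g ≠ 0) (hf : f ≠ 0) : ∃ x, g x = 1 ∧ f x ≠ 0 := by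
  obtain ⟨w, hgw, hfw⟩ := exists_apply_ne_zero_and_apply_ne_zero hg hf
  exact ⟨(g w)⁻¹ • w, by simp [hgw], by simp [hgw, hfw]⟩

theorem LinearMap.range_comp_subtype_ker {K M N : Type*} [Field K]
    [AddCommGroup M] [Module K M] [AddCommGroup N] [Module K N]
    (U : M →ₗ[K] N) (f : M →ₗ[K] K) {x₀ : M} (hU : U x₀ = 0) (hf : f x₀ ≠ 0) :
    range (U ∘ₗ (ker f).subtype) = range U := by
  rw [range_comp, Submodule.range_subtype, ← Submodule.map_top,
    ← span_singleton_sup_ker_eq_top f hf, Submodule.map_sup, Submodule.map_span,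
    Set.image_singleton, hU, Submodule.span_singleton_eq_bot.mpr rfl, bot_sup_eq]

section Topological

variable {K M N : Type*} [TopologicalSpace M] [TopologicalSpace N]

theorem ContinuousLinearMap.snd_comp_ne_zero_of_denseRange {P : Type*} [Semiring K]
    [AddCommMonoid M] [Module K M] [AddCommMonoid N] [Module K N] [AddCommMonoid P] [Module K P]
    [TopologicalSpace P] [T1Space P] [Nontrivial P]
    {T : M →L[K] N × P} (hT : DenseRange T) : (snd K N P).comp T ≠ 0 := by
  intro h
  have hdense : DenseRange ((snd K N P).comp T) :=
    Prod.snd_surjective.denseRange.comp hT continuous_snd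
  rw [h, FunLike.coe_zero, denseRange_iff_closure_range, Pi.zero_def, Set.range_const,
    closure_singleton] at hdense
  obtain ⟨p, hp⟩ := exists_ne (0 : P)
  exact hp (hdense.symm.subset (Set.mem_univ p))

variable [Field K] [AddCommGroup M] [Module K M] [AddCommGroup N] [Module K N]

theorem DenseRange.comp_subtypeL_ker {U : M →L[K] N} (hU : DenseRange U) (f : M →ₗ[K] K)
    {x₀ : M} (hUx₀ : U x₀ = 0) (hf : f x₀ ≠ 0) : DenseRange (U.comp (ker f).subtypeL) := by
  change Dense (Set.range ((U : M →ₗ[K] N) ∘ₗ (ker f).subtype))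
  rw [← coe_range, range_comp_subtype_ker _ f hUx₀ hf, coe_range]
  exact hU

theorem DenseRange.fst_sub_smulRight_snd_comp [TopologicalSpace K] [IsTopologicalAddGroup N]
    [ContinuousSMul K N] {T : M →L[K] N × K} (hT : DenseRange T) (v : N) :
    DenseRange
      ((ContinuousLinearMap.fst K N K - (ContinuousLinearMap.snd K N K).smulRight v).comp T) :=
  have hsurj : Function.Surjective
      (ContinuousLinearMap.fst K N K - (ContinuousLinearMap.snd K N K).smulRight v) :=
    fun y ↦ ⟨(y, 0), by simp⟩
  hsurj.denseRange.comp hT (ContinuousLinearMap.continuous _)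

end Topological

theorem stmt_9_general {𝕜 : Type*} [RCLike 𝕜] {X Y : Type*}
    [AddCommGroup X] [Module 𝕜 X] [TopologicalSpace X]
    [AddCommGroup Y] [Module 𝕜 Y] [TopologicalSpace Y] [IsTopologicalAddGroup Y]
    [ContinuousSMul 𝕜 Y]
    (T : X →L[𝕜] (Y × 𝕜)) (hT : DenseRange T)
    (f : X →ₗ[𝕜] 𝕜) (hf : f ≠ 0) :
    ∃ S : (LinearMap.ker f) →L[𝕜] Y, DenseRange S := by
  have hsnd : ((ContinuousLinearMap.snd 𝕜 Y 𝕜).comp T : X →ₗ[𝕜] 𝕜) ≠ 0 :=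
    ContinuousLinearMap.coe_injective.ne (ContinuousLinearMap.snd_comp_ne_zero_of_denseRange hT)
  obtain ⟨x₀, hTx₀, hfx₀⟩ := exists_apply_eq_one_and_apply_ne_zero hsnd hf
  have hTx₀' : (T x₀).2 = 1 := hTx₀
  exact ⟨_, (hT.fst_sub_smulRight_snd_comp (T x₀).1).comp_subtypeL_ker f (by simp [hTx₀']) hfx₀⟩

/-- If T : X → Y × K is a continuous linear operator with dense range and H is
a closed hyperplane of X, then there is a continuous linear operator S : H → Y
with dense range. -/
theorem stmt_9 {𝕜 : Type*} [RCLike 𝕜] {X Y : Type*}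
    [AddCommGroup X] [Module 𝕜 X] [TopologicalSpace X] [IsTopologicalAddGroup X]
    [ContinuousSMul 𝕜 X]
    [AddCommGroup Y] [Module 𝕜 Y] [TopologicalSpace Y] [IsTopologicalAddGroup Y]
    [ContinuousSMul 𝕜 Y]
    (T : X →L[𝕜] (Y × 𝕜)) (hT : DenseRange T)
    (f : X →ₗ[𝕜] 𝕜) (hf : f ≠ 0) (hH : IsClosed ((LinearMap.ker f : Submodule 𝕜 X) : Set X)) :
    ∃ S : (LinearMap.ker f) →L[𝕜] Y, DenseRange S :=
  stmt_9_general T hT f hf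
end

section
/- Let Y be a locally convex space whose topology is not weak, i.e., there exists a continuous seminorm p on Y such that ker p has infinite codimension. Then there exists a uniformly equicontinuous sequence {f_n} in the continuous dual Y' such that for every finitely supported scalar sequence (a_n) there exists y ∈ Y with f_n(y) = a_n for all n. -/
/-!
The seminorm `p` descends to a norm on `Y ⧸ ker p`, an infinite-dimensional normed space. There,
alternately picking a vector killed by the functionals chosen so far and, by Hahn–Banach, a
functional killing the vectors chosen so far yields a biorthogonal sequence `(e n, g n)`, which
can be rescaled so that `‖g n‖ ≤ 1`. The functionals `f n = g n ∘ π` then satisfy `‖f n y‖ ≤ p y`,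
hence are bounded by `1` on `{p < 1}`, and `∑ a m • x m` with `π (x m) = e m` has coordinates `a`.
-/

open Module Submodule

theorem exists_forall_eq_zero_notMem_of_not_finite {K V ι : Type*} [Field K] [AddCommGroup V]
    [Module K V] [Finite ι] (hV : ¬ Module.Finite K V) (S : Submodule K V) [Module.Finite K S]
    (φ : ι → Dual K V) : ∃ v ∉ S, ∀ i, φ i v = 0 := by
  set Φ : V →ₗ[K] ι → K := LinearMap.pi φ
  have hker : ¬ LinearMap.ker Φ ≤ S := fun hle ↦ by
    have : Module.Finite K (LinearMap.ker Φ) := Submodule.finiteDimensional_of_le hle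
    have : Module.Finite K (V ⧸ LinearMap.ker Φ) := .equiv Φ.quotKerEquivRange.symm
    exact hV (.of_submodule_quotient (LinearMap.ker Φ))
  obtain ⟨v, hvΦ, hvS⟩ := SetLike.not_le_iff_exists.1 hker
  exact ⟨v, hvS, fun i ↦ congrFun hvΦ i⟩

section Normed

variable {𝕜 E : Type*} [RCLike 𝕜] [NormedAddCommGroup E] [NormedSpace 𝕜 E]

theorem exists_strongDual_eq_one_of_notMem {S : Submodule 𝕜 E} [FiniteDimensional 𝕜 S] {v : E}
    (hv : v ∉ S) : ∃ g : StrongDual 𝕜 E, g v = 1 ∧ ∀ x ∈ S, g x = 0 := by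
  have : IsClosed (S : Set E) := S.closed_of_finiteDimensional
  have hv' : S.mkQ v ≠ 0 := by simpa using hv
  obtain ⟨g, hg⟩ := SeparatingDual.exists_eq_one (R := 𝕜) hv'
  exact ⟨g.comp S.mkQL, hg, fun x hx ↦ by simp [(Submodule.Quotient.mk_eq_zero S).2 hx]⟩

theorem exists_biorthogonal_of_not_finite (hE : ¬ Module.Finite 𝕜 E) :
    ∃ (e : ℕ → E) (g : ℕ → StrongDual 𝕜 E), ∀ n m, g n (e m) = if n = m then 1 else 0 := by
  classical
  have step : ∀ s : Finset (E × StrongDual 𝕜 E), (∀ x ∈ s, x.2 x.1 = 1) →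
      ∃ y : E × StrongDual 𝕜 E, y.2 y.1 = 1 ∧ ∀ x ∈ s, x.2 y.1 = 0 ∧ y.2 x.1 = 0 := by
    intro s _
    obtain ⟨v, hvS, hv⟩ := exists_forall_eq_zero_notMem_of_not_finite hE
      (span 𝕜 (s.image Prod.fst : Set E)) (fun x : s ↦ (x.1.2 : E →ₗ[𝕜] 𝕜))
    obtain ⟨g, hgv, hgS⟩ := exists_strongDual_eq_one_of_notMem hvS
    exact ⟨(v, g), hgv, fun x hx ↦
      ⟨hv ⟨x, hx⟩, hgS _ (subset_span (Finset.mem_image_of_mem _ hx))⟩⟩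
  obtain ⟨f, hf, hfr⟩ := exists_seq_of_forall_finset_exists _ _ step
  refine ⟨fun n ↦ (f n).1, fun n ↦ (f n).2, fun n m ↦ ?_⟩
  rcases lt_trichotomy n m with h | rfl | h
  · simpa [h.ne] using (hfr n m h).1
  · simpa using hf n
  · simpa [h.ne'] using (hfr m n h).2

theorem exists_biorthogonal_norm_le_one_of_not_finite (hE : ¬ Module.Finite 𝕜 E) :
    ∃ (e : ℕ → E) (g : ℕ → StrongDual 𝕜 E),
      (∀ n, ‖g n‖ ≤ 1) ∧ ∀ n m, g n (e m) = if n = m then 1 else 0 := by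
  obtain ⟨e, g, hge⟩ := exists_biorthogonal_of_not_finite hE
  refine ⟨fun m ↦ (‖g m‖ : 𝕜) • e m, fun n ↦ (‖g n‖⁻¹ : 𝕜) • g n, fun n ↦ ?_, fun n m ↦ ?_⟩
  · rw [norm_smul, norm_inv, RCLike.norm_ofReal, abs_norm]
    exact inv_mul_le_one_of_le₀ le_rfl (norm_nonneg _)
  · have hgn : ‖g n‖ ≠ 0 := fun h ↦ by simpa [norm_eq_zero.1 h] using hge n n
    rcases eq_or_ne n m with rfl | h
    · simp [hge, hgn]
    · simp [hge, h]

end Normed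

theorem apply_linearCombination_of_biorthogonal {R M ι F : Type*} [CommSemiring R]
    [AddCommMonoid M] [Module R M] [FunLike F M R] [LinearMapClass F R M R] [DecidableEq ι]
    {f : ι → F} {x : ι → M} (h : ∀ n m, f n (x m) = if n = m then 1 else 0)
    (a : ι →₀ R) (n : ι) : f n (Finsupp.linearCombination R x a) = a n := by
  simp [Finsupp.linearCombination_apply, map_finsuppSum, h]

namespace Seminorm

variable {𝕜 Y : Type*} [NormedField 𝕜] [AddCommGroup Y] [Module 𝕜 Y] (p : Seminorm 𝕜 Y)

def ker : Submodule 𝕜 Y where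
  carrier := {y | p y = 0}
  add_mem' {x y} hx hy := le_antisymm ((map_add_le_add p x y).trans_eq (by rw [hx, hy, add_zero]))
    (apply_nonneg p _)
  zero_mem' := map_zero p
  smul_mem' c y (hy : p y = 0) := show p (c • y) = 0 by rw [map_smul_eq_mul, hy, mul_zero]

theorem eq_of_sub_mem_ker {x y : Y} (h : x - y ∈ p.ker) : p x = p y :=
  sub_eq_zero.1 <| norm_eq_zero.1 <| le_antisymm ((p.norm_sub_map_le_sub x y).trans_eq h)
    (norm_nonneg _)

/-- A type synonym for `Y ⧸ p.ker`, so that the norm induced by `p` does not compete with the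
quotient topology of `Y`. -/
def KerQuotient : Type _ := Y ⧸ p.ker

namespace KerQuotient

instance : AddCommGroup p.KerQuotient := inferInstanceAs (AddCommGroup (Y ⧸ p.ker))

instance : Module 𝕜 p.KerQuotient := inferInstanceAs (Module 𝕜 (Y ⧸ p.ker))

def mk : Y →ₗ[𝕜] p.KerQuotient := p.ker.mkQ

theorem mk_surjective : Function.Surjective (mk p) := p.ker.mkQ_surjective

noncomputable def addGroupNorm : AddGroupNorm p.KerQuotient where
  toFun := Quotient.lift p fun _ _ h ↦ p.eq_of_sub_mem_ker ((Submodule.quotientRel_def _).1 h)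
  map_zero' := map_zero p
  add_le' := by
    rintro ⟨x⟩ ⟨y⟩
    exact map_add_le_add p x y
  neg' := by
    rintro ⟨x⟩
    exact map_neg_eq_map p x
  eq_zero_of_map_eq_zero' := by
    rintro ⟨x⟩ hx
    exact (Submodule.Quotient.mk_eq_zero p.ker).2 hx

noncomputable instance : NormedAddCommGroup p.KerQuotient := (addGroupNorm p).toNormedAddCommGroup

theorem norm_mk (y : Y) : ‖mk p y‖ = p y := rfl

noncomputable instance : NormedSpace 𝕜 p.KerQuotient where
  norm_smul_le c := by
    rintro ⟨y⟩
    exact (map_smul_eq_mul p c y).le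

variable [TopologicalSpace Y] [IsTopologicalAddGroup Y]

def mkCLM (hp : Continuous p) : Y →L[𝕜] p.KerQuotient where
  toLinearMap := mk p
  cont := by
    refine continuous_of_continuousAt_zero (mk p) ?_
    rw [ContinuousAt, map_zero, tendsto_zero_iff_norm_tendsto_zero]
    simpa [norm_mk] using hp.tendsto 0

end KerQuotient

end Seminorm

theorem stmt_10_general {𝕜 : Type*} [RCLike 𝕜] {Y : Type*}
    [AddCommGroup Y] [Module 𝕜 Y] [TopologicalSpace Y] [IsTopologicalAddGroup Y]
    (p : Seminorm 𝕜 Y) (hp : Continuous p)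
    (W : Submodule 𝕜 Y) (hW : (W : Set Y) = {y : Y | p y = 0})
    (hcodim : ¬ Module.Finite 𝕜 (Y ⧸ W)) :
    ∃ f : ℕ → (Y →L[𝕜] 𝕜),
      (∃ U ∈ nhds (0 : Y), ∀ x ∈ U, ∀ n : ℕ, ‖f n x‖ ≤ 1) ∧
      ∀ a : ℕ →₀ 𝕜, ∃ y : Y, ∀ n : ℕ, f n y = a n := by
  obtain rfl : W = p.ker := SetLike.coe_injective hW
  obtain ⟨e, g, hg, hge⟩ := exists_biorthogonal_norm_le_one_of_not_finite
    (E := p.KerQuotient) hcodim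
  let π := Seminorm.KerQuotient.mkCLM p hp
  choose x hx using fun m ↦ Seminorm.KerQuotient.mk_surjective p (e m)
  refine ⟨fun n ↦ (g n).comp π, ⟨{y | p y < 1}, (isOpen_lt hp continuous_const).mem_nhds (by simp),
    fun y hy n ↦ ?_⟩, fun a ↦ ⟨Finsupp.linearCombination 𝕜 x a, fun n ↦ ?_⟩⟩
  · calc ‖g n (π y)‖ ≤ ‖g n‖ * ‖π y‖ := (g n).le_opNorm _
      _ ≤ 1 * 1 := mul_le_mul (hg n) hy.le (norm_nonneg _) zero_le_one
      _ = 1 := one_mul 1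
  · refine apply_linearCombination_of_biorthogonal (f := fun n ↦ (g n).comp π) (fun n m ↦ ?_) a n
    simp [π, Seminorm.KerQuotient.mkCLM, hx, hge]

/-- If Y is a locally convex space whose topology is not weak (there is a
continuous seminorm whose kernel has infinite codimension), then there is a
uniformly equicontinuous sequence of continuous functionals on Y whose
evaluation map covers all finitely supported scalar sequences. -/
theorem stmt_10 {𝕜 : Type*} [RCLike 𝕜] {Y : Type*}
    [AddCommGroup Y] [Module 𝕜 Y] [TopologicalSpace Y] [IsTopologicalAddGroup Y]
    [ContinuousSMul 𝕜 Y] [Module ℝ Y] [IsScalarTower ℝ 𝕜 Y] [LocallyConvexSpace ℝ Y]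
    (p : Seminorm 𝕜 Y) (hp : Continuous p)
    (W : Submodule 𝕜 Y) (hW : (W : Set Y) = {y : Y | p y = 0})
    (hcodim : ¬ Module.Finite 𝕜 (Y ⧸ W)) :
    ∃ f : ℕ → (Y →L[𝕜] 𝕜),
      (∃ U ∈ nhds (0 : Y), ∀ x ∈ U, ∀ n : ℕ, ‖f n x‖ ≤ 1) ∧
      ∀ a : ℕ →₀ 𝕜, ∃ y : Y, ∀ n : ℕ, f n y = a n :=
  stmt_10_general p hp W hW hcodim
end

section
/- Let X be a topological vector space and T : X → X a hypercyclic continuous linear operator (some x has dense orbit {Tⁿx : n ≥ 0}). Then X has no closed T-invariant subspace of finite positive codimension. In particular, if dim X' satisfies 0 < dim X' < ∞, then X supports no hypercyclic operator. -/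
/-!
Quotienting by a closed invariant subspace `W` of finite positive codimension turns a dense orbit
of `T` into a dense orbit `Sⁿ x` of a linear map `S` on a nonzero finite-dimensional Hausdorff
space `E` of dimension `d`. By Cayley–Hamilton this orbit spans the same subspace as
`x, S x, …, S^(d-1) x`, which is therefore a basis, so `Δ y = det (y, S y, …, S^(d-1) y)` does not
vanish at `x`. Now `Δ` is continuous, homogeneous of degree `d`, and `Δ ∘ S = det S • Δ`; hence `Δ`
maps the orbit onto the geometric sequence `(det S)ⁿ Δ x`, all of whose limit points have norm
`≤ ‖Δ x‖` or all `≥ ‖Δ x‖`, while `Δ (t • x)` and `Δ (t⁻¹ • x)` for `1 < ‖t‖` lie on both sides.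
When the continuous dual has finite positive dimension, the common kernel of all continuous
functionals is such a subspace `W` for every `T`.
-/

open Set Submodule Module

section KrylovSpan

open Polynomial

variable {R M : Type*} [CommRing R] [Nontrivial R] [AddCommGroup M] [Module R M]
  [Module.Free R M] [Module.Finite R M]

theorem LinearMap.pow_apply_mem_span_pow_apply_fin (f : M →ₗ[R] M) (x : M) (n : ℕ) :
    (f ^ n) x ∈ span R (Set.range fun i : Fin (finrank R M) => (f ^ (i : ℕ)) x) := by
  set r := X ^ n %ₘ f.charpoly
  have hr : r.degree < finrank R M := by
    simpa [degree_eq_natDegree f.charpoly_monic.ne_zero, f.charpoly_natDegree] using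
      degree_modByMonic_lt (X ^ n) f.charpoly_monic
  rw [f.pow_eq_aeval_mod_charpoly, aeval_eq_sum_range, LinearMap.sum_apply]
  refine sum_mem fun i _ => ?_
  by_cases hi : r.coeff i = 0
  · simp [r, hi]
  · have hi_lt : i < finrank R M := by exact_mod_cast (le_degree_of_ne_zero hi).trans_lt hr
    exact smul_mem _ _ (subset_span ⟨⟨i, hi_lt⟩, rfl⟩)

theorem LinearMap.span_range_pow_apply_eq_fin (f : M →ₗ[R] M) (x : M) :
    span R (Set.range fun n : ℕ => (f ^ n) x) =
      span R (Set.range fun i : Fin (finrank R M) => (f ^ (i : ℕ)) x) :=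
  le_antisymm (span_le.2 <| range_subset_iff.2 <| f.pow_apply_mem_span_pow_apply_fin x)
    (span_mono <| range_subset_iff.2 fun i => ⟨i, rfl⟩)

end KrylovSpan

section Geometric

variable {𝕜 : Type*} [NormedDivisionRing 𝕜] {a c w : 𝕜}

theorem norm_le_of_mem_closure_range_pow_mul (ha : ‖a‖ ≤ 1)
    (hw : w ∈ closure (Set.range fun n : ℕ => a ^ n * c)) : ‖w‖ ≤ ‖c‖ := by
  refine closure_minimal (range_subset_iff.2 fun n => ?_)
    (isClosed_le continuous_norm continuous_const) hw
  simpa [norm_mul, norm_pow] using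
    mul_le_of_le_one_left (norm_nonneg c) (pow_le_one₀ (norm_nonneg a) ha)

theorem le_norm_of_mem_closure_range_pow_mul (ha : 1 ≤ ‖a‖)
    (hw : w ∈ closure (Set.range fun n : ℕ => a ^ n * c)) : ‖c‖ ≤ ‖w‖ := by
  refine closure_minimal (range_subset_iff.2 fun n => ?_)
    (isClosed_le continuous_const continuous_norm) hw
  simpa [norm_mul, norm_pow] using le_mul_of_one_le_left (norm_nonneg c) (one_le_pow₀ ha)

end Geometric

theorem not_denseRange_of_map_eq_pow_mul {𝕜 E : Type*} [NontriviallyNormedField 𝕜]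
    [TopologicalSpace E] [SMul 𝕜 E] {Δ : E → 𝕜} (hΔ : Continuous Δ) {d : ℕ} (hd : d ≠ 0)
    (hΔ_smul : ∀ (t : 𝕜) y, Δ (t • y) = t ^ d * Δ y) {x : E} (hx : Δ x ≠ 0)
    {v : ℕ → E} {a : 𝕜} (hv : ∀ n, Δ (v n) = a ^ n * Δ x) : ¬ DenseRange v := by
  intro hdense
  have hclosure : ∀ y, Δ y ∈ closure (Set.range fun n : ℕ => a ^ n * Δ x) := fun y => by
    have := hΔ.range_subset_closure_image_dense hdense ⟨y, rfl⟩
    rwa [← range_comp, Function.comp_def, funext hv] at this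
  obtain ⟨t, ht⟩ := NormedField.exists_one_lt_norm 𝕜
  have hcx : 0 < ‖Δ x‖ := norm_pos_iff.2 hx
  rcases le_total ‖a‖ 1 with ha | ha
  · have hle := norm_le_of_mem_closure_range_pow_mul ha (hclosure (t • x))
    rw [hΔ_smul, norm_mul, norm_pow] at hle
    nlinarith [one_lt_pow₀ ht hd]
  · have hge := le_norm_of_mem_closure_range_pow_mul ha (hclosure (t⁻¹ • x))
    rw [hΔ_smul, norm_mul, norm_pow, norm_inv] at hge
    nlinarith [pow_lt_one₀ (by positivity) (inv_lt_one_of_one_lt₀ ht) hd]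

section KrylovDet

variable {R M : Type*} [CommRing R] [AddCommGroup M] [Module R M] {n : ℕ}

noncomputable def krylovDet (b : Basis (Fin n) R M) (f : M →ₗ[R] M) (y : M) : R :=
  b.det fun i => (f ^ (i : ℕ)) y

theorem continuous_krylovDet {𝕜 E : Type*} [NontriviallyNormedField 𝕜] [CompleteSpace 𝕜]
    [AddCommGroup E] [Module 𝕜 E] [TopologicalSpace E] [IsTopologicalAddGroup E]
    [ContinuousSMul 𝕜 E] [T2Space E] [FiniteDimensional 𝕜 E]
    (b : Basis (Fin n) 𝕜 E) (f : E →ₗ[𝕜] E) : Continuous (krylovDet b f) := by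
  unfold krylovDet
  simp_rw [b.det_apply]
  refine (continuous_matrix fun i j => ?_).matrix_det
  exact ((b.coord i).comp (f ^ (j : ℕ))).continuous_of_finiteDimensional

variable (b : Basis (Fin n) R M) (f : M →ₗ[R] M)

theorem krylovDet_apply_self (y : M) :
    krylovDet b f (f y) = LinearMap.det f * krylovDet b f y := by
  rw [krylovDet, krylovDet, ← b.det_comp]
  congr 1
  ext i
  simp only [Function.comp_apply, ← Module.End.mul_apply, ← pow_succ, ← pow_succ']

theorem krylovDet_pow_apply (k : ℕ) (y : M) :
    krylovDet b f ((f ^ k) y) = LinearMap.det f ^ k * krylovDet b f y := by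
  induction k with
  | zero => simp
  | succ k ih =>
    rw [pow_succ', Module.End.mul_apply, krylovDet_apply_self, ih, pow_succ', mul_assoc]

theorem krylovDet_smul (t : R) (y : M) : krylovDet b f (t • y) = t ^ n * krylovDet b f y := by
  simpa [krylovDet] using b.det.map_smul_univ (fun _ => t) fun i => (f ^ (i : ℕ)) y

end KrylovDet

theorem LinearMap.not_denseRange_pow_apply {𝕜 E : Type*} [NontriviallyNormedField 𝕜]
    [CompleteSpace 𝕜] [AddCommGroup E] [Module 𝕜 E] [TopologicalSpace E]
    [IsTopologicalAddGroup E] [ContinuousSMul 𝕜 E] [T2Space E] [FiniteDimensional 𝕜 E]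
    [Nontrivial E] (f : E →ₗ[𝕜] E) (x : E) : ¬ DenseRange fun n : ℕ => (f ^ n) x := by
  intro hdense
  have hspan : span 𝕜 (Set.range fun n : ℕ => (f ^ n) x) = ⊤ := by
    rw [← (closed_of_finiteDimensional (span 𝕜 _)).submodule_topologicalClosure_eq,
      ← dense_iff_topologicalClosure_eq_top]
    exact hdense.mono subset_span
  rw [f.span_range_pow_apply_eq_fin] at hspan
  let b := finBasis 𝕜 E
  have hbasis : IsUnit (krylovDet b f x) := b.is_basis_iff_det.1
    ⟨linearIndependent_of_top_le_span_of_card_eq_finrank hspan.ge (Fintype.card_fin _), hspan⟩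
  exact not_denseRange_of_map_eq_pow_mul (continuous_krylovDet b f) finrank_pos.ne'
    (krylovDet_smul b f) hbasis.ne_zero (krylovDet_pow_apply b f · x) hdense

theorem ContinuousLinearMap.not_denseRange_pow_apply_of_mapsTo {𝕜 X : Type*}
    [NontriviallyNormedField 𝕜] [CompleteSpace 𝕜] [AddCommGroup X] [Module 𝕜 X]
    [TopologicalSpace X] [IsTopologicalAddGroup X] [ContinuousSMul 𝕜 X] (T : X →L[𝕜] X)
    {W : Submodule 𝕜 X} (hW : IsClosed (W : Set X)) (hTW : ∀ w ∈ W, T w ∈ W)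
    [Module.Finite 𝕜 (X ⧸ W)] (hW_ne : W ≠ ⊤) (x : X) :
    ¬ DenseRange fun n : ℕ => (T ^ n) x := by
  have : IsClosed (W : Set X) := hW
  have : Nontrivial (X ⧸ W) := Submodule.Quotient.nontrivial_iff.2 hW_ne
  let S := W.mapQ W (T : X →ₗ[𝕜] X) hTW
  have hS : ∀ n : ℕ, (S ^ n) (W.mkQ x) = W.mkQ ((T ^ n) x) := fun n => by
    rw [← mapQ_pow, mkQ_apply, mapQ_apply, ← ContinuousLinearMap.toLinearMap_pow]
    rfl
  intro hdense
  refine S.not_denseRange_pow_apply (W.mkQ x) ?_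
  simpa only [Function.comp_def, hS] using
    W.mkQ_surjective.denseRange.comp hdense W.continuous_mkQ

section DualCommonKer

variable (𝕜 X : Type*) [Field 𝕜] [TopologicalSpace 𝕜] [AddCommGroup X] [Module 𝕜 X]
  [TopologicalSpace X]

def dualCommonKer : Submodule 𝕜 X := ⨅ f : X →L[𝕜] 𝕜, LinearMap.ker (f : X →ₗ[𝕜] 𝕜)

variable {𝕜 X}

theorem mem_dualCommonKer {y : X} : y ∈ dualCommonKer 𝕜 X ↔ ∀ f : X →L[𝕜] 𝕜, f y = 0 := by
  simp [dualCommonKer]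

theorem isClosed_dualCommonKer [T1Space 𝕜] : IsClosed (dualCommonKer 𝕜 X : Set X) := by
  rw [dualCommonKer, coe_iInf]
  exact isClosed_iInter fun f => f.isClosed_ker

theorem ContinuousLinearMap.apply_mem_dualCommonKer (T : X →L[𝕜] X) {w : X}
    (hw : w ∈ dualCommonKer 𝕜 X) : T w ∈ dualCommonKer 𝕜 X :=
  mem_dualCommonKer.2 fun f => mem_dualCommonKer.1 hw (f.comp T)

theorem dualCommonKer_eq_ker_flip_coeLM [IsTopologicalRing 𝕜] :
    dualCommonKer 𝕜 X =
      LinearMap.ker (ContinuousLinearMap.coeLM 𝕜 (M := X) (N₃ := 𝕜)).flip := by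
  ext y
  simp [mem_dualCommonKer, LinearMap.ext_iff]

instance [IsTopologicalRing 𝕜] [Module.Finite 𝕜 (X →L[𝕜] 𝕜)] :
    Module.Finite 𝕜 (X ⧸ dualCommonKer 𝕜 X) := by
  rw [dualCommonKer_eq_ker_flip_coeLM]
  exact Module.Finite.equiv (LinearMap.quotKerEquivRange _).symm

theorem dualCommonKer_ne_top [Nontrivial (X →L[𝕜] 𝕜)] : dualCommonKer 𝕜 X ≠ ⊤ := by
  obtain ⟨f, hf⟩ := exists_ne (0 : X →L[𝕜] 𝕜)
  obtain ⟨y, hy⟩ : ∃ y, f y ≠ 0 := by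
    by_contra! h
    exact hf (ContinuousLinearMap.ext h)
  exact fun htop => hy (mem_dualCommonKer.1 (htop ▸ mem_top) f)

end DualCommonKer

/-- A hypercyclic continuous linear operator has no closed invariant subspace
of finite positive codimension; in particular a topological vector space whose
continuous dual has finite positive dimension supports no hypercyclic
operator. -/
theorem stmt_11 {𝕜 : Type*} [RCLike 𝕜] {X : Type*}
    [AddCommGroup X] [Module 𝕜 X] [TopologicalSpace X] [IsTopologicalAddGroup X]
    [ContinuousSMul 𝕜 X] :
    (∀ T : X →L[𝕜] X, (∃ x : X, Dense (Set.range fun n : ℕ => (T ^ n) x)) →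
      ∀ W : Submodule 𝕜 X, IsClosed (W : Set X) → (∀ w ∈ W, T w ∈ W) →
        Module.Finite 𝕜 (X ⧸ W) → W ≠ ⊤ → False) ∧
    (0 < Module.rank 𝕜 (X →L[𝕜] 𝕜) → Module.rank 𝕜 (X →L[𝕜] 𝕜) < Cardinal.aleph0 →
      ¬ ∃ T : X →L[𝕜] X, ∃ x : X, Dense (Set.range fun n : ℕ => (T ^ n) x)) := by
  refine ⟨fun T ⟨x, hx⟩ W hW hTW _ hW_ne =>
    T.not_denseRange_pow_apply_of_mapsTo hW hTW hW_ne x hx, ?_⟩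
  rintro hpos hfin ⟨T, x, hx⟩
  have := rank_lt_aleph0_iff.1 hfin
  have := rank_pos_iff_nontrivial.1 hpos
  exact T.not_denseRange_pow_apply_of_mapsTo isClosed_dualCommonKer
    (fun _ => T.apply_mem_dualCommonKer) dualCommonKer_ne_top x hx
end

section
/- Let X be a rigid topological vector space (every continuous linear operator on X is a scalar multiple of the identity) and Y a topological vector space such that every continuous linear operator Y → X has finite rank and the only continuous linear operator X → Y is zero. Then X × Y supports no multicyclic continuous linear operator: for every continuous linear T : X × Y → X × Y and every finite-dimensional subspace L of X × Y, the span of ⋃_n Tⁿ(L) is not dense in X × Y (assuming X is infinite-dimensional). -/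
/-!
The first coordinate of `T (x, y)` is `c • x + B y` for a scalar `c` (rigidity applied to the
`X → X` corner of `T`) and a finite-rank `B : Y → X`. Hence `Tⁿ(L)` stays inside
`fst⁻¹(M)` with `M = fst(L) + range B` finite-dimensional, and density of the orbit span would make
`M` dense in `X`. Rigidity also forces `X` to be Hausdorff: a nonzero vector `x₀` in the closure of
`0` would make the rank-one map `x ↦ g x • x₀` continuous, hence scalar, and `X` one-dimensional.
So `M` is closed, `M = X`, and `X` is finite-dimensional.
-/

open Topology

theorem continuous_of_forall_mem_closure_singleton {α β : Type*} [TopologicalSpace α]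
    [TopologicalSpace β] [R0Space β] {f : α → β} {b : β} (hf : ∀ a, f a ∈ closure {b}) :
    Continuous f := by
  have hspec : ∀ a, f a ⤳ b := fun a => (specializes_iff_mem_closure.2 (hf a)).symm
  refine continuous_iff_continuousAt.2 fun a => ?_
  rw [ContinuousAt, ((hspec a).antisymm (hspec a).symm).nhds_eq]
  exact Filter.tendsto_iff_forall_eventually_mem.2 fun U hU =>
    Filter.Eventually.of_forall fun a' => mem_of_mem_nhds (hspec a' hU)

section Rigid

variable {𝕜 X : Type*} [Field 𝕜] [AddCommGroup X] [Module 𝕜 X] [TopologicalSpace X]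
  [IsTopologicalAddGroup X] [ContinuousConstSMul 𝕜 X]

theorem t2Space_of_forall_eq_smul (hXinf : ¬ Module.Finite 𝕜 X)
    (hrigid : ∀ T : X →L[𝕜] X, ∃ c : 𝕜, ∀ x : X, T x = c • x) : T2Space X := by
  refine IsTopologicalAddGroup.t2Space_iff_zero_closed.2 <|
    isClosed_of_closure_subset fun x₀ hx₀ => Set.mem_singleton_iff.2 ?_
  by_contra hne
  obtain ⟨g, hg⟩ := (LinearMap.toSpanSingleton 𝕜 X x₀).exists_leftInverse_of_injective
    (LinearMap.ker_toSpanSingleton (R := 𝕜) hne)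
  have hgx₀ : g x₀ = 1 := by simpa using LinearMap.congr_fun hg 1
  have hclosure : ∀ a : 𝕜, a • x₀ ∈ closure ({0} : Set X) := fun a =>
    specializes_iff_mem_closure.1 <| by
      simpa using (specializes_iff_mem_closure.2 hx₀).map (continuous_const_smul a)
  obtain ⟨c, hc⟩ := hrigid ⟨g.smulRight x₀,
    continuous_of_forall_mem_closure_singleton fun x => hclosure (g x)⟩
  have hc₁ : c = 1 := by
    have h : x₀ = c • x₀ := by simpa [hgx₀] using hc x₀
    exact smul_left_injective 𝕜 hne (h.symm.trans (one_smul 𝕜 x₀).symm)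
  refine hXinf ⟨⟨{x₀}, Submodule.eq_top_iff'.2 fun x => ?_⟩⟩
  have hx : g x • x₀ = x := by simpa [hc₁] using hc x
  simpa [hx] using Submodule.smul_mem _ (g x) (Submodule.mem_span_singleton_self x₀)

end Rigid

theorem Submodule.span_iUnion_pow_image_le {R M : Type*} [Semiring R] [AddCommMonoid M]
    [Module R M] [TopologicalSpace M] (T : M →L[R] M) {L N : Submodule R M} (hLN : L ≤ N)
    (hN : ∀ x ∈ N, T x ∈ N) : span R (⋃ n : ℕ, (T ^ n) '' (L : Set M)) ≤ N := by
  refine span_le.2 <| Set.iUnion_subset fun n => Set.image_subset_iff.2 fun x hx => ?_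
  induction n with
  | zero => exact hLN hx
  | succ n ih =>
    rw [pow_succ']
    exact hN _ ih

theorem FiniteDimensional.of_dense_submodule {𝕜 E : Type*} [NontriviallyNormedField 𝕜]
    [CompleteSpace 𝕜] [AddCommGroup E] [TopologicalSpace E] [IsTopologicalAddGroup E]
    [T2Space E] [Module 𝕜 E] [ContinuousSMul 𝕜 E] (s : Submodule 𝕜 E) [FiniteDimensional 𝕜 s]
    (hs : Dense (s : Set E)) : FiniteDimensional 𝕜 E := by
  have htop : s = ⊤ := s.closed_of_finiteDimensional.submodule_topologicalClosure_eq.symm.trans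
    (Submodule.dense_iff_topologicalClosure_eq_top.1 hs)
  subst htop
  exact Module.Finite.equiv Submodule.topEquiv

theorem stmt_12_general {𝕜 : Type*} [RCLike 𝕜] {X Y : Type*}
    [AddCommGroup X] [Module 𝕜 X] [TopologicalSpace X] [IsTopologicalAddGroup X]
    [ContinuousSMul 𝕜 X]
    [AddCommGroup Y] [Module 𝕜 Y] [TopologicalSpace Y]
    (hXinf : ¬ Module.Finite 𝕜 X)
    (hrigid : ∀ T : X →L[𝕜] X, ∃ c : 𝕜, ∀ x : X, T x = c • x)
    (hYX : ∀ S : Y →L[𝕜] X, Module.Finite 𝕜 (LinearMap.range (S : Y →ₗ[𝕜] X))) :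
    ∀ T : (X × Y) →L[𝕜] (X × Y), ∀ L : Submodule 𝕜 (X × Y), Module.Finite 𝕜 L →
      ¬ Dense ((Submodule.span 𝕜 (⋃ n : ℕ, (T ^ n) '' (L : Set (X × Y)))) : Set (X × Y)) := by
  intro T L hL hdense
  have := t2Space_of_forall_eq_smul hXinf hrigid
  set B : Y →L[𝕜] X := .fst 𝕜 X Y ∘L T ∘L .inr 𝕜 X Y
  obtain ⟨c, hc⟩ := hrigid (.fst 𝕜 X Y ∘L T ∘L .inl 𝕜 X Y)
  have hT : ∀ z : X × Y, (T z).1 = c • z.1 + B z.2 := fun z => by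
    rw [← hc]
    simp [B, ← Prod.fst_add, ← map_add]
  have := hYX B
  let M : Submodule 𝕜 X := L.map (LinearMap.fst 𝕜 X Y) ⊔ LinearMap.range (B : Y →ₗ[𝕜] X)
  have horbit := Submodule.span_iUnion_pow_image_le T (N := M.comap (LinearMap.fst 𝕜 X Y))
    (fun z hz => Submodule.mem_sup_left (Submodule.mem_map_of_mem hz))
    (fun z hz => by
      rw [Submodule.mem_comap, LinearMap.fst_apply, hT]
      exact M.add_mem (M.smul_mem c hz) (Submodule.mem_sup_right (LinearMap.mem_range_self _ _)))
  have hMdense : Dense (M : Set X) :=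
    (Prod.fst_surjective.denseRange.dense_image continuous_fst (hdense.mono horbit)).mono
      (Set.image_preimage_subset _ _)
  exact hXinf (FiniteDimensional.of_dense_submodule M hMdense)

/-- If X is a rigid infinite-dimensional topological vector space, every
continuous linear operator Y → X has finite rank, and the only continuous
linear operator X → Y is zero, then X × Y supports no multicyclic continuous
linear operator. -/
theorem stmt_12 {𝕜 : Type*} [RCLike 𝕜] {X Y : Type*}
    [AddCommGroup X] [Module 𝕜 X] [TopologicalSpace X] [IsTopologicalAddGroup X]
    [ContinuousSMul 𝕜 X]
    [AddCommGroup Y] [Module 𝕜 Y] [TopologicalSpace Y] [IsTopologicalAddGroup Y]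
    [ContinuousSMul 𝕜 Y]
    (hXinf : ¬ Module.Finite 𝕜 X)
    (hrigid : ∀ T : X →L[𝕜] X, ∃ c : 𝕜, ∀ x : X, T x = c • x)
    (hYX : ∀ S : Y →L[𝕜] X, Module.Finite 𝕜 (LinearMap.range (S : Y →ₗ[𝕜] X)))
    (hXY : ∀ S : X →L[𝕜] Y, S = 0) :
    ∀ T : (X × Y) →L[𝕜] (X × Y), ∀ L : Submodule 𝕜 (X × Y), Module.Finite 𝕜 L →
      ¬ Dense ((Submodule.span 𝕜 (⋃ n : ℕ, (T ^ n) '' (L : Set (X × Y)))) : Set (X × Y)) :=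
  stmt_12_general hXinf hrigid hYX
end

section
/- Let X be a topological vector space with a hereditarily universal countable family {T_n : n ∈ ℕ} of continuous linear operators, meaning that for every infinite subset A ⊆ ℕ there exists x ∈ X with {T_n x : n ∈ A} dense in X. Then the algebraic dimension of X is uncountable. -/
/-!
If `X` had countable dimension, it would be the union of finite-dimensional subspaces `F k`.
For a single finite-dimensional `F`, every infinite `B ⊆ ℕ` contains an infinite `B'` along which
no orbit `{T n x : n ∈ B'}` with `x ∈ F` is dense. To see this, fix a balanced neighbourhood `U`
of `0` whose `(dim F + 1)`-fold sumset misses some `z`, and enlarge a subspace `C ⊆ F` one vector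
at a time, each time passing to the times at which the new vector lands in `U`. Orbits of vectors
of `C` then stay in a dilate of an at most `(dim C)`-fold sumset of `U`, whose closure misses a
dilate of `z`; and once no vector outside `C` visits `U` infinitely often, their orbits miss the
interior of `U` up to finitely many points. A diagonal set `D` lies, up to finitely many elements,
inside each of the nested sets obtained for `F 0, F 1, …`, so no orbit along `D` is dense.
-/

open Set Filter Topology Pointwise Module

theorem exists_infinite_forall_exists_diff_finite (Q : ℕ → Set ℕ → Prop)
    (hQ : ∀ k B, B.Infinite → ∃ B' ⊆ B, B'.Infinite ∧ Q k B') :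
    ∃ D : Set ℕ, D.Infinite ∧ ∀ k, ∃ S, Q k S ∧ (D \ S).Finite := by
  choose Φ hΦsub hΦinf hΦQ using fun k (B : {B : Set ℕ // B.Infinite}) => hQ k B B.2
  let S : ℕ → {B : Set ℕ // B.Infinite} :=
    fun k => Nat.rec ⟨univ, infinite_univ⟩ (fun k B => ⟨Φ k B, hΦinf k B⟩) k
  have hanti : Antitone fun k => (S k).1 := antitone_nat_of_succ_le fun k => hΦsub k (S k)
  choose d hdS hd using fun k => (S k).2.exists_gt k
  have hD : (range d).Infinite :=
    infinite_of_not_bddAbove fun ⟨M, hM⟩ => (hd M).not_ge (hM (mem_range_self M))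
  refine ⟨range d, hD, fun k => ⟨S (k + 1), hΦQ k (S k), ?_⟩⟩
  refine ((finite_Iio (k + 1)).image d).subset ?_
  rintro _ ⟨⟨j, rfl⟩, hj⟩
  exact ⟨j, not_le.1 fun hkj => hj (hanti hkj (hdS j)), rfl⟩

theorem exists_finiteDimensional_cover_of_rank_le_aleph0 {K V : Type*} [DivisionRing K]
    [AddCommGroup V] [Module K V] (h : Module.rank K V ≤ Cardinal.aleph0) :
    ∃ F : ℕ → Submodule K V, (∀ k, FiniteDimensional K (F k)) ∧ ∀ x, ∃ k, x ∈ F k := by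
  let b := Basis.ofVectorSpace K V
  have : Countable (Basis.ofVectorSpaceIndex K V) :=
    Cardinal.mk_le_aleph0_iff.mp (b.mk_eq_rank''.trans_le h)
  obtain ⟨e, he⟩ := exists_surjective_nat (Finset (Basis.ofVectorSpaceIndex K V))
  refine ⟨fun k => Submodule.span K (b '' e k),
    fun k => FiniteDimensional.span_of_finite K ((e k).finite_toSet.image b), fun x => ?_⟩
  obtain ⟨k, hk⟩ := he (b.repr x).support
  exact ⟨k, by simpa only [hk] using b.mem_span_repr_support x⟩

section Density

variable {Y α : Type*} [TopologicalSpace Y] [T1Space Y] [∀ y : Y, NeBot (𝓝[≠] y)]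

theorem Dense.image_of_diff_finite {f : α → Y} {D S : Set α} (h : Dense (f '' D))
    (hDS : (D \ S).Finite) : Dense (f '' S) := by
  refine (h.sdiff_finite (hDS.image f)).mono (sdiff_subset_iff.2 ?_)
  rw [← image_union, sdiff_union_self]
  exact image_mono subset_union_left

theorem not_dense_image_of_finite_inter_preimage {f : α → Y} {B : Set α} {U : Set Y}
    (hU : (interior U).Nonempty) (hfin : (B ∩ f ⁻¹' U).Finite) : ¬Dense (f '' B) := by
  intro h
  obtain ⟨y, hyU, hyB, hy⟩ :=
    (h.sdiff_finite (hfin.image f)).inter_open_nonempty _ isOpen_interior hU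
  obtain ⟨n, hn, rfl⟩ := hyB
  exact hy ⟨n, ⟨hn, interior_subset (s := U) hyU⟩, rfl⟩

end Density

theorem exists_nhds_zero_nsmul_subset {M : Type*} [TopologicalSpace M] [AddMonoid M]
    [ContinuousAdd M] {W : Set M} (hW : W ∈ 𝓝 0) :
    ∀ n : ℕ, ∃ U ∈ 𝓝 (0 : M), n • U ⊆ W
  | 0 => ⟨univ, univ_mem, by rw [zero_nsmul]; exact zero_subset.2 (mem_of_mem_nhds hW)⟩
  | n + 1 => by
    obtain ⟨V, hV, hVW⟩ := exists_nhds_zero_half hW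
    obtain ⟨U, hU, hUV⟩ := exists_nhds_zero_nsmul_subset hV n
    refine ⟨U ∩ V, inter_mem hU hV, ?_⟩
    rw [succ_nsmul]
    rintro _ ⟨a, ha, b, hb, rfl⟩
    exact hVW a (hUV (nsmul_subset_nsmul_left inter_subset_left ha)) b hb.2

theorem Balanced.nsmul {𝕜 X : Type*} [SeminormedRing 𝕜] [AddCommGroup X] [Module 𝕜 X]
    {U : Set X} (hU : Balanced 𝕜 U) : ∀ k : ℕ, Balanced 𝕜 (k • U)
  | 0 => by rw [zero_nsmul]; exact balanced_zero
  | k + 1 => by rw [succ_nsmul]; exact (hU.nsmul k).add hU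

section Balanced

variable {𝕜 X : Type*} [NontriviallyNormedField 𝕜] [AddCommGroup X] [Module 𝕜 X]
  [TopologicalSpace X] [IsTopologicalAddGroup X] [ContinuousSMul 𝕜 X]

theorem exists_balanced_nhds_zero_nsmul_subset {W : Set X} (hW : W ∈ 𝓝 0) (n : ℕ) :
    ∃ U ∈ 𝓝 (0 : X), Balanced 𝕜 U ∧ n • U ⊆ W := by
  obtain ⟨U, hU, hUW⟩ := exists_nhds_zero_nsmul_subset hW n
  exact ⟨balancedCore 𝕜 U, balancedCore_mem_nhds_zero hU, balancedCore_balanced U,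
    (nsmul_subset_nsmul_left (balancedCore_subset U)).trans hUW⟩

theorem not_dense_smul_of_notMem_add [T1Space X] {S U : Set X} {z : X} {μ : 𝕜}
    (hU : U ∈ 𝓝 0) (hUb : Balanced 𝕜 U) (hμ : μ ≠ 0) (hz : z ∉ S + U) :
    ¬Dense (μ • S) := by
  intro h
  have hμz : μ • z ∈ μ • closure S := by rw [← closure_smul₀, h.closure_eq]; trivial
  exact hz <| closure_subset_add_right_of_mem_nhds_zero_of_neg S hU
    (fun x hx => hUb.neg_mem_iff.2 hx) ((smul_mem_smul_set_iff₀ hμ _ _).1 hμz)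

end Balanced

section Blocking

variable {𝕜 E X : Type*} [NontriviallyNormedField 𝕜] [AddCommGroup E] [Module 𝕜 E]
  [AddCommGroup X] [Module 𝕜 X]

def TrappedAlong (T : ℕ → E →ₗ[𝕜] X) (U : Set X) (k : ℕ) (C : Submodule 𝕜 E)
    (B : Set ℕ) : Prop :=
  ∀ x ∈ C, ∃ μ : 𝕜, μ ≠ 0 ∧ (T · x) '' B ⊆ μ • (k • U)

variable {T : ℕ → E →ₗ[𝕜] X} {U : Set X}

theorem trappedAlong_bot (T : ℕ → E →ₗ[𝕜] X) (U : Set X) (B : Set ℕ) :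
    TrappedAlong T U 0 ⊥ B := by
  intro x hx
  refine ⟨1, one_ne_zero, ?_⟩
  rintro _ ⟨n, -, rfl⟩
  simp [(Submodule.mem_bot 𝕜).1 hx]

theorem TrappedAlong.sup_span_singleton (hU : Balanced 𝕜 U) {k : ℕ} {C : Submodule 𝕜 E}
    {B : Set ℕ} (hC : TrappedAlong T U k C B) (x₀ : E) :
    TrappedAlong T U (k + 1) (C ⊔ Submodule.span 𝕜 {x₀}) (B ∩ (T · x₀) ⁻¹' U) := by
  intro x hx
  obtain ⟨y, hy, _, hw, rfl⟩ := Submodule.mem_sup.1 hx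
  obtain ⟨a, rfl⟩ := Submodule.mem_span_singleton.1 hw
  obtain ⟨μ, hμ, hμy⟩ := hC y hy
  obtain ⟨ν, hν⟩ := NormedField.exists_lt_norm 𝕜 (max ‖μ‖ ‖a‖)
  have hμν : ‖μ‖ ≤ ‖ν‖ := (le_max_left _ _).trans hν.le
  have haν : ‖a‖ ≤ ‖ν‖ := (le_max_right _ _).trans hν.le
  refine ⟨ν, norm_pos_iff.1 (((norm_nonneg μ).trans (le_max_left _ _)).trans_lt hν), ?_⟩
  rintro _ ⟨n, ⟨hnB, hnU⟩, rfl⟩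
  simp only [map_add, map_smul, succ_nsmul, smul_add]
  exact add_mem_add ((hU.nsmul k).smul_mono hμν (hμy ⟨n, hnB, rfl⟩))
    (hU.smul_mono haν (smul_mem_smul_set hnU))

theorem TrappedAlong.exists_escaping [FiniteDimensional 𝕜 E] (hU : Balanced 𝕜 U) {k : ℕ}
    {C : Submodule 𝕜 E} {B : Set ℕ} (hkC : k ≤ finrank 𝕜 C) (hB : B.Infinite)
    (hC : TrappedAlong T U k C B) :
    ∃ l ≤ finrank 𝕜 E, ∃ C' : Submodule 𝕜 E, ∃ B' ⊆ B, B'.Infinite ∧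
      TrappedAlong T U l C' B' ∧ ∀ x ∉ C', (B' ∩ (T · x) ⁻¹' U).Finite := by
  by_cases hesc : ∀ x ∉ C, (B ∩ (T · x) ⁻¹' U).Finite
  · exact ⟨k, hkC.trans (Submodule.finrank_le C), C, B, subset_rfl, hB, hC, hesc⟩
  push Not at hesc
  obtain ⟨x₀, hx₀, hinf⟩ := hesc
  have hlt : C < C ⊔ Submodule.span 𝕜 {x₀} :=
    left_lt_sup.2 (by rwa [Submodule.span_singleton_le_iff_mem])
  have hrank := Submodule.finrank_lt_finrank_of_lt hlt
  obtain ⟨l, hl, C', B', hB', hB'inf, hC', hesc'⟩ :=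
    (hC.sup_span_singleton hU x₀).exists_escaping hU (by omega) hinf
  exact ⟨l, hl, C', B', hB'.trans inter_subset_left, hB'inf, hC', hesc'⟩
termination_by finrank 𝕜 E - finrank 𝕜 C
decreasing_by
  have := Submodule.finrank_le (C ⊔ Submodule.span 𝕜 {x₀})
  omega

variable [TopologicalSpace X] [IsTopologicalAddGroup X] [ContinuousSMul 𝕜 X] [T1Space X]
  [Nontrivial X]

theorem exists_infinite_subset_forall_not_dense [FiniteDimensional 𝕜 E]
    (T : ℕ → E →ₗ[𝕜] X) {B : Set ℕ} (hB : B.Infinite) :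
    ∃ B' ⊆ B, B'.Infinite ∧ ∀ x, ¬Dense ((T · x) '' B') := by
  have := Module.punctured_nhds_neBot 𝕜 X
  obtain ⟨z, hz⟩ := exists_ne (0 : X)
  obtain ⟨U, hU, hUb, hUz⟩ := exists_balanced_nhds_zero_nsmul_subset (𝕜 := 𝕜)
    (isOpen_compl_singleton.mem_nhds hz.symm) (finrank 𝕜 E + 1)
  obtain ⟨k, hk, C, B', hB', hB'inf, hC, hesc⟩ :=
    (trappedAlong_bot T U B).exists_escaping hUb (Nat.zero_le _) hB
  refine ⟨B', hB', hB'inf, fun x => ?_⟩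
  by_cases hx : x ∈ C
  · obtain ⟨μ, hμ, hμx⟩ := hC x hx
    have hzk : z ∉ k • U + U := by
      rw [← succ_nsmul]
      exact fun h => hUz (nsmul_subset_nsmul_right (mem_of_mem_nhds hU) (by omega) h) rfl
    exact fun h => not_dense_smul_of_notMem_add hU hUb hμ hzk (h.mono hμx)
  · exact not_dense_image_of_finite_inter_preimage
      ⟨0, mem_interior_iff_mem_nhds.2 hU⟩ (hesc x hx)

end Blocking

/-- A topological vector space admitting a hereditarily universal countable
family of continuous linear operators has uncountable algebraic dimension. -/
theorem stmt_14 {𝕜 : Type*} [RCLike 𝕜] {X : Type*}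
    [AddCommGroup X] [Module 𝕜 X] [TopologicalSpace X] [IsTopologicalAddGroup X]
    [ContinuousSMul 𝕜 X] [T2Space X] [Nontrivial X]
    (T : ℕ → (X →L[𝕜] X))
    (huniv : ∀ A : Set ℕ, A.Infinite → ∃ x : X, Dense {y : X | ∃ n ∈ A, T n x = y}) :
    Cardinal.aleph0 < Module.rank 𝕜 X := by
  by_contra! hrank
  have := Module.punctured_nhds_neBot 𝕜 X
  obtain ⟨F, hF, hcover⟩ := exists_finiteDimensional_cover_of_rank_le_aleph0 hrank
  obtain ⟨D, hD, hDS⟩ := exists_infinite_forall_exists_diff_finite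
    (fun k S => ∀ x ∈ F k, ¬Dense ((T · x) '' S)) fun k B hB => by
      have := hF k
      obtain ⟨B', hB', hB'inf, hnd⟩ := exists_infinite_subset_forall_not_dense
        (fun n => (T n).toLinearMap ∘ₗ (F k).subtype) hB
      exact ⟨B', hB', hB'inf, fun x hx => hnd ⟨x, hx⟩⟩
  obtain ⟨x, hx⟩ := huniv D hD
  obtain ⟨k, hxk⟩ := hcover x
  obtain ⟨S, hS, hDS⟩ := hDS k
  exact hS x hxk (hx.image_of_diff_finite hDS)
end

section
/- Let T : ω → X be a continuous linear operator from ω = K^ℕ (product topology) to a topological vector space X that contains no subspace isomorphic to ω. Then T has finite rank. -/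
/-!
If `T` has infinite rank we find a copy of `ω` in `X`. Let `Y m` be the closure of the image under
`T` of the sequences vanishing below `m`. Continuity of `T` makes these closed subspaces decrease to
`0`, and passing to `X ⧸ S` gives `⋂ₘ (Y m ⊔ S) = S` for every closed `S`. Infinite rank therefore
lets us choose blocks `x k`, vanishing below an increasing sequence `n k`, with
`T (x k) ∉ Y (n (k + 1)) ⊔ span {T (x j) | j < k}`. The map `a ↦ T (∑ₖ a k • x k)` is continuous,
and its `k`-th coordinate vanishes exactly on the preimage of that closed subspace; so the
coordinates of its inverse are continuous and it is an isomorphism of `ω` onto its image.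
-/

open Topology Finset Submodule

section Tail

variable (R : Type*) [Semiring R]

def tailSubspace (n : ℕ) : Submodule R (ℕ → R) where
  carrier := {x | ∀ i < n, x i = 0}
  add_mem' hx hy i hi := by simp [hx i hi, hy i hi]
  zero_mem' _ _ := rfl
  smul_mem' c _ hx i hi := by simp [hx i hi]

variable {R}

theorem tailSubspace_antitone : Antitone (tailSubspace R) :=
  fun _ _ hmn _ hx i hi => hx i (hi.trans_le hmn)

theorem exists_tailSubspace_subset [TopologicalSpace R] {U : Set (ℕ → R)} (hU : U ∈ 𝓝 0) :
    ∃ N, (tailSubspace R N : Set (ℕ → R)) ⊆ U := by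
  rw [nhds_pi, Filter.mem_pi] at hU
  obtain ⟨I, hI, t, ht, hsub⟩ := hU
  obtain ⟨N, hN⟩ := hI.bddAbove
  refine ⟨N + 1, fun x hx => hsub fun i hi => ?_⟩
  rw [hx i (Nat.lt_succ_of_le (hN hi))]
  exact mem_of_mem_nhds (ht i)

end Tail

section BlockCombination

variable {R : Type*} [CommRing R] [TopologicalSpace R] [IsTopologicalRing R]

-- Stands for `∑ₖ a k • x k`: cutting the sum at `k ≤ i` loses nothing
-- once `x k` vanishes below `n k ≥ k`.
def blockCombination (x : ℕ → ℕ → R) : (ℕ → R) →L[R] (ℕ → R) :=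
  ContinuousLinearMap.pi fun i => ∑ k ∈ range (i + 1), x k i • ContinuousLinearMap.proj k

theorem blockCombination_apply (x : ℕ → ℕ → R) (a : ℕ → R) (i : ℕ) :
    blockCombination x a i = ∑ k ∈ range (i + 1), x k i * a k := by
  simp [blockCombination]

theorem blockCombination_sub_sum_mem {n : ℕ → ℕ} (hn : StrictMono n) {x : ℕ → ℕ → R}
    (hx : ∀ k, x k ∈ tailSubspace R (n k)) (a : ℕ → R) (K : ℕ) :
    blockCombination x a - ∑ k ∈ range (K + 1), a k • x k ∈ tailSubspace R (n (K + 1)) := by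
  intro i hi
  have hvanish : ∀ k, i < n k → x k i * a k = 0 := fun k hk => by rw [hx k i hk, zero_mul]
  rw [Pi.sub_apply, sub_eq_zero, blockCombination_apply, Finset.sum_apply]
  refine sum_congr_of_eq_on_inter (fun k _ hk => hvanish k ?_) (fun k _ hk => ?_) ?_
  · simp only [mem_range, not_lt] at hk
    exact hi.trans_le (hn.monotone hk)
  · simp only [mem_range, not_lt] at hk
    rw [Pi.smul_apply, smul_eq_mul, mul_comm]
    exact hvanish k ((Nat.lt_of_succ_le hk).trans_le (hn.id_le k))
  · intro k _ _
    simp [mul_comm]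

end BlockCombination

section TailClosure

variable {𝕜 : Type*} [NontriviallyNormedField 𝕜] {X : Type*} [AddCommGroup X] [Module 𝕜 X]
  [TopologicalSpace X] [IsTopologicalAddGroup X] [ContinuousSMul 𝕜 X]

noncomputable def tailClosure (T : (ℕ → 𝕜) →L[𝕜] X) (n : ℕ) : Submodule 𝕜 X :=
  ((tailSubspace 𝕜 n).map (T : (ℕ → 𝕜) →ₗ[𝕜] X)).topologicalClosure

variable (T : (ℕ → 𝕜) →L[𝕜] X)

theorem tailClosure_antitone : Antitone (tailClosure T) :=
  fun _ _ hmn => topologicalClosure_mono (map_mono (tailSubspace_antitone hmn))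

theorem isClosed_tailClosure (n : ℕ) : IsClosed (tailClosure T n : Set X) :=
  isClosed_topologicalClosure _

theorem apply_mem_tailClosure {n : ℕ} {x : ℕ → 𝕜} (hx : x ∈ tailSubspace 𝕜 n) :
    T x ∈ tailClosure T n :=
  le_topologicalClosure _ ⟨x, hx, rfl⟩

theorem eq_zero_of_forall_mem_tailClosure [T2Space X] {v : X} (hv : ∀ m, v ∈ tailClosure T m) :
    v = 0 := by
  by_contra hv0
  obtain ⟨V, ⟨hV, hVc⟩, hVv⟩ := (closed_nhds_basis (0 : X)).mem_iff.mp
    (isOpen_compl_singleton.mem_nhds (Ne.symm hv0))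
  obtain ⟨N, hN⟩ := exists_tailSubspace_subset (T.continuous.tendsto' 0 0 (map_zero T) hV)
  have hNV : (tailClosure T N : Set X) ⊆ V := by
    rw [tailClosure, topologicalClosure_coe]
    exact closure_minimal (by rintro _ ⟨y, hy, rfl⟩; exact hN hy) hVc
  exact hVv (hNV (hv N)) rfl

theorem map_tailClosure_le {Y : Type*} [AddCommGroup Y] [Module 𝕜 Y] [TopologicalSpace Y]
    [IsTopologicalAddGroup Y] [ContinuousSMul 𝕜 Y] (f : X →L[𝕜] Y) (m : ℕ) :
    (tailClosure T m).map (f : X →ₗ[𝕜] Y) ≤ tailClosure (f ∘L T) m := by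
  rintro _ ⟨y, hy, rfl⟩
  rw [tailClosure, ← SetLike.mem_coe, topologicalClosure_coe, map_coe, ContinuousLinearMap.coe_coe,
    ContinuousLinearMap.coe_comp, Set.image_comp]
  exact image_closure_subset_closure_image f.continuous ⟨y, hy, rfl⟩

theorem mem_of_forall_mem_tailClosure_sup [T2Space X] {S : Submodule 𝕜 X}
    (hS : IsClosed (S : Set X)) {w : X} (hw : ∀ m, w ∈ tailClosure T m ⊔ S) : w ∈ S := by
  have : IsClosed (S : Set X) := hS
  rw [← Quotient.mk_eq_zero]
  refine eq_zero_of_forall_mem_tailClosure (S.mkQL ∘L T) fun m => map_tailClosure_le T S.mkQL m ?_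
  obtain ⟨y, hy, s, hs, rfl⟩ := mem_sup.mp (hw m)
  exact ⟨y, hy, by simp [(Quotient.mk_eq_zero S).2 hs]⟩

theorem coord_eq_zero_iff_apply_blockCombination_mem {n : ℕ → ℕ} (hn : StrictMono n)
    {x : ℕ → ℕ → 𝕜} (hx : ∀ k, x k ∈ tailSubspace 𝕜 (n k)) {K : ℕ}
    (hTx : T (x K) ∉ tailClosure T (n (K + 1)) ⊔ span 𝕜 (T ∘ x '' Set.Iio K)) (a : ℕ → 𝕜) :
    a K = 0 ↔
      T (blockCombination x a) ∈ tailClosure T (n (K + 1)) ⊔ span 𝕜 (T ∘ x '' Set.Iio K) := by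
  set R := tailClosure T (n (K + 1)) ⊔ span 𝕜 (T ∘ x '' Set.Iio K)
  have hdiff : T (blockCombination x a) - a K • T (x K) ∈ R := by
    have htail := apply_mem_tailClosure T (blockCombination_sub_sum_mem hn hx a K)
    have hhead : ∑ k ∈ range K, a k • T (x k) ∈ span 𝕜 (T ∘ x '' Set.Iio K) :=
      sum_mem fun k hk => smul_mem _ _ (subset_span ⟨k, mem_range.1 hk, rfl⟩)
    convert add_mem (mem_sup_left htail) (mem_sup_right hhead) using 1
    rw [map_sub, map_sum, sum_range_succ]
    simp only [map_smul]
    abel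
  constructor
  · intro ha
    simpa [ha] using hdiff
  · intro hmem
    by_contra ha
    exact hTx ((smul_mem_iff R ha).1 (by simpa using sub_mem hmem hdiff))

end TailClosure

section Embedding

variable {𝕜 : Type*} [NontriviallyNormedField 𝕜] {X : Type*} [AddCommGroup X] [Module 𝕜 X]
  [TopologicalSpace X] [IsTopologicalAddGroup X] [ContinuousSMul 𝕜 X]

-- The coordinate functionals of the inverse have closed kernels, hence are continuous.
theorem nonempty_continuousLinearEquiv_range_of_coord_eq_zero_iff {ι : Type*}
    (Φ : (ι → 𝕜) →L[𝕜] X) (R : ι → Submodule 𝕜 X) (hR : ∀ i, IsClosed (R i : Set X))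
    (hΦ : ∀ a i, a i = 0 ↔ Φ a ∈ R i) :
    Nonempty ((ι → 𝕜) ≃L[𝕜] LinearMap.range (Φ : (ι → 𝕜) →ₗ[𝕜] X)) := by
  have hinj : Function.Injective Φ := (injective_iff_map_eq_zero Φ).2 fun a ha =>
    funext fun i => (hΦ a i).2 (ha ▸ zero_mem _)
  let e := LinearEquiv.ofInjective (Φ : (ι → 𝕜) →ₗ[𝕜] X) hinj
  have hcoord : ∀ i, Continuous fun w => e.symm w i := fun i => by
    let l := (LinearMap.proj i).comp e.symm.toLinearMap
    have hker : (LinearMap.ker l : Set (LinearMap.range (Φ : (ι → 𝕜) →ₗ[𝕜] X))) =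
        Subtype.val ⁻¹' R i := by
      ext w
      obtain ⟨a, rfl⟩ := e.surjective w
      simp [l, hΦ, e]
    exact l.continuous_of_isClosed_ker (hker ▸ (hR i).preimage continuous_subtype_val)
  exact ⟨{ e with
    continuous_toFun := Φ.continuous.subtype_mk _
    continuous_invFun := continuous_pi hcoord }⟩

end Embedding

section InfiniteRank

variable {𝕜 : Type*} [NontriviallyNormedField 𝕜] [CompleteSpace 𝕜] {X : Type*} [AddCommGroup X]
  [Module 𝕜 X] [TopologicalSpace X] [IsTopologicalAddGroup X] [ContinuousSMul 𝕜 X] [T2Space X]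
  (T : (ℕ → 𝕜) →L[𝕜] X)

theorem exists_mem_tailSubspace_notMem_tailClosure_sup
    (hT : ¬ FiniteDimensional 𝕜 (LinearMap.range (T : (ℕ → 𝕜) →ₗ[𝕜] X))) (n : ℕ)
    (S : Submodule 𝕜 X) [FiniteDimensional 𝕜 S] :
    ∃ x ∈ tailSubspace 𝕜 n, ∃ m, n < m ∧ T x ∉ tailClosure T m ⊔ S := by
  by_contra! h
  have hS : ∀ x ∈ tailSubspace 𝕜 n, T x ∈ S := fun x hx =>
    mem_of_forall_mem_tailClosure_sup T S.closed_of_finiteDimensional fun m =>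
      sup_le_sup_right (tailClosure_antitone T (le_max_left m (n + 1))) S
        (h x hx _ (Nat.lt_of_succ_le (le_max_right m (n + 1))))
  let F : Submodule 𝕜 X := span 𝕜 ((fun i => T (Pi.single i 1)) '' Set.Iio n)
  have : FiniteDimensional 𝕜 F := FiniteDimensional.span_of_finite 𝕜 ((Set.finite_Iio n).image _)
  refine hT (Submodule.finiteDimensional_of_le (S₂ := F ⊔ S) ?_)
  rintro _ ⟨x, rfl⟩
  let head := ∑ i ∈ range n, x i • (Pi.single i 1 : ℕ → 𝕜)
  have hhead : T head ∈ F := by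
    simp only [head, map_sum, map_smul]
    exact sum_mem fun i hi => smul_mem F (x i) (subset_span ⟨i, mem_range.1 hi, rfl⟩)
  have htail : x - head ∈ tailSubspace 𝕜 n := fun i hi => by
    simp [head, Finset.sum_apply, Pi.single_apply, hi]
  exact mem_sup.2 ⟨_, hhead, _, hS _ htail, by simp⟩

theorem exists_seq_notMem_tailClosure_sup_span
    (hT : ¬ FiniteDimensional 𝕜 (LinearMap.range (T : (ℕ → 𝕜) →ₗ[𝕜] X))) :
    ∃ (n : ℕ → ℕ) (x : ℕ → ℕ → 𝕜), StrictMono n ∧ (∀ k, x k ∈ tailSubspace 𝕜 (n k)) ∧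
      ∀ K, T (x K) ∉ tailClosure T (n (K + 1)) ⊔ span 𝕜 (T ∘ x '' Set.Iio K) := by
  classical
  choose y hy m hm hym using fun p : ℕ × Finset X =>
    exists_mem_tailSubspace_notMem_tailClosure_sup T hT p.1 (span 𝕜 (p.2 : Set X))
  let state : ℕ → ℕ × Finset X :=
    fun K => Nat.rec (0, ∅) (fun _ p => (m p, insert (T (y p)) p.2)) K
  have hsub : ∀ K, T ∘ (y ∘ state) '' Set.Iio K ⊆ (state K).2 := by
    intro K
    induction K with
    | zero => simp
    | succ K ih =>
      rintro _ ⟨k, hk, rfl⟩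
      show T (y (state k)) ∈ insert (T (y (state K))) (state K).2
      rcases Nat.lt_succ_iff_lt_or_eq.1 hk with hk | rfl
      · exact Finset.mem_insert_of_mem (ih ⟨k, hk, rfl⟩)
      · exact Finset.mem_insert_self _ _
  exact ⟨fun K => (state K).1, y ∘ state, strictMono_nat_of_lt_succ fun K => hm _,
    fun K => hy _,
    fun K h => hym (state K) (sup_le_sup_left (span_mono (hsub K)) (tailClosure T _) h)⟩

end InfiniteRank

/-- A continuous linear operator from ω = K^ℕ into a topological vector space
containing no subspace isomorphic to ω has finite rank. -/
theorem stmt_16 {𝕜 : Type*} [RCLike 𝕜] {X : Type*}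
    [AddCommGroup X] [Module 𝕜 X] [TopologicalSpace X] [IsTopologicalAddGroup X]
    [ContinuousSMul 𝕜 X] [T2Space X]
    (hnosub : ∀ W : Submodule 𝕜 X, ¬ Nonempty ((ℕ → 𝕜) ≃L[𝕜] W))
    (T : (ℕ → 𝕜) →L[𝕜] X) :
    Module.Finite 𝕜 (LinearMap.range (T : (ℕ → 𝕜) →ₗ[𝕜] X)) := by
  by_contra hT
  obtain ⟨n, x, hn, hx, hTx⟩ := exists_seq_notMem_tailClosure_sup_span T hT
  have hR : ∀ K, IsClosed
      ((tailClosure T (n (K + 1)) ⊔ span 𝕜 (T ∘ x '' Set.Iio K) : Submodule 𝕜 X) : Set X) :=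
    fun K =>
      have := FiniteDimensional.span_of_finite 𝕜 ((Set.finite_Iio K).image (T ∘ x))
      isClosed_sup_finiteDimensional _ _ (isClosed_tailClosure T _)
  exact hnosub _ (nonempty_continuousLinearEquiv_range_of_coord_eq_zero_iff
    (T ∘L blockCombination x) _ hR
    fun a K => coord_eq_zero_iff_apply_blockCombination_mem T hn hx (hTx K) a)
end
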